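/- arXiv:1610.00614 — 7 statements merged into one kernel-verified Lean document; each statement's English description precedes it below -/
import Mathlib

section
/- Let (G_i)_{i∈ω} be an inverse system of finite discrete groups with surjective bonding homomorphisms φ_{i,j}: G_j → G_i (i ≤ j), such that |G_{i+1}|/|G_i| > 1 for every i, and let G be its inverse limit, i.e. the subgroup of ∏_{i∈ω} G_i consisting of all (g_i) with φ_{j,j+1}(g_{j+1}) = g_j for all j, with the topology inherited from the product. Then there exists a subgroup S of G that is null with respect to the Haar measure of G and non-meager in G. -/
set_option linter.unusedSectionVars false
set_option linter.unusedVariables false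

open MeasureTheory Filter Set Pointwise
open scoped ENNReal NNReal

def inverseLimit {G : ℕ → Type*} [∀ i, Group (G i)] (φ : ∀ i, G (i + 1) →* G i) :
    Subgroup (∀ i, G i) where
  carrier := {x | ∀ i, φ i (x (i + 1)) = x i}
  one_mem' := fun i => by simp
  mul_mem' := fun {a b} ha hb i => by simp [ha i, hb i]
  inv_mem' := fun {a} ha i => by simp [ha i]

namespace NNM

variable {G : ℕ → Type*} [∀ i, Group (G i)] (φ : ∀ i, G (i + 1) →* G i)

/-- Composite bonding map as a plain function. -/
def bond {a b : ℕ} (h : a ≤ b) : G b → G a :=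
  Nat.leRecOn (C := fun k => G k → G a) h (fun {k} f => f ∘ (φ k)) id

lemma bond_self {a : ℕ} (h : a ≤ a) (w : G a) : bond φ h w = w :=
  congrFun (Nat.leRecOn_self (C := fun k => G k → G a)
    (next := fun {k} f => f ∘ (φ k)) id) w

lemma bond_succ {a b : ℕ} (h1 : a ≤ b) {h2 : a ≤ b + 1} (w : G (b + 1)) :
    bond φ h2 w = bond φ h1 (φ b w) :=
  congrFun (Nat.leRecOn_succ (C := fun k => G k → G a) h1 id) w

lemma bond_phi {m : ℕ} (h : m ≤ m + 1) (w : G (m + 1)) : bond φ h w = φ m w := by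
  rw [bond_succ φ (le_refl m), bond_self]

lemma bond_trans {a b : ℕ} (hab : a ≤ b) :
    ∀ {e : ℕ} (hbe : b ≤ e) (hae : a ≤ e) (w : G e),
      bond φ hae w = bond φ hab (bond φ hbe w) := by
  intro e hbe
  induction e, hbe using Nat.le_induction with
  | base =>
    intro hae w
    rw [bond_self]
  | succ e hbe ih =>
    intro hae w
    rw [bond_succ φ (hab.trans hbe), bond_succ φ hbe, ih (hab.trans hbe)]

lemma bond_surj (hsurj : ∀ i, Function.Surjective (φ i)) {a b : ℕ} (h : a ≤ b) :
    Function.Surjective (bond φ h) := by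
  induction b, h using Nat.le_induction with
  | base => exact fun w => ⟨w, bond_self φ _ w⟩
  | succ e hbe ih =>
    intro v
    obtain ⟨u, hu⟩ := ih v
    obtain ⟨u', hu'⟩ := hsurj e u
    exact ⟨u', by rw [bond_succ φ hbe, hu', hu]⟩

lemma thread_proj {x : ∀ i, G i} (hx : ∀ i, φ i (x (i + 1)) = x i) :
    ∀ {a b : ℕ} (h : a ≤ b), bond φ h (x b) = x a := by
  intro a b h
  induction b, h using Nat.le_induction with
  | base => exact bond_self φ _ _
  | succ e hbe ih => rw [bond_succ φ hbe, hx e, ih]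

lemma mem_inverseLimit (x : ∀ i, G i) :
    x ∈ inverseLimit φ ↔ ∀ i, φ i (x (i + 1)) = x i := Iff.rfl

/-- Existence of a thread through a prescribed value. -/
lemma exists_thread (hsurj : ∀ i, Function.Surjective (φ i)) (b : ℕ) (w : G b) :
    ∃ x : (inverseLimit φ), (x : ∀ i, G i) b = w := by
  classical
  let sec : ∀ i, G i → G (i + 1) := fun i => Function.surjInv (hsurj i)
  have hsec : ∀ i v, φ i (sec i v) = v := fun i v => Function.surjInv_eq (hsurj i) v
  let u : ∀ k, G (b + k) := fun k => Nat.rec w (fun k uk => sec (b + k) uk) k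
  have hu : ∀ k, ∀ h : b ≤ b + k, bond φ h (u k) = w := by
    intro k
    induction k with
    | zero => intro h; exact bond_self φ h w
    | succ k ih =>
      intro h
      have h1 : b ≤ b + k := Nat.le_add_right b k
      have h2 : b + k ≤ b + k + 1 := Nat.le_succ _
      rw [bond_trans φ h1 h2 h, bond_phi, hsec, ih]
  let x : ∀ m, G m := fun m => bond φ (Nat.le_add_left m b) (u m)
  have hx : ∀ m, φ m (x (m + 1)) = x m := by
    intro m
    show φ m (bond φ _ (u (m + 1))) = bond φ _ (u m)
    rw [← bond_phi φ (Nat.le_succ m) (bond φ (Nat.le_add_left (m+1) b) (u (m+1))),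
      ← bond_trans φ (Nat.le_succ m) (Nat.le_add_left (m+1) b)
        ((Nat.le_succ m).trans (Nat.le_add_left (m+1) b))]
    show bond φ _ (u (m+1)) = bond φ _ (u m)
    have h3 : b + m ≤ b + m + 1 := Nat.le_succ _
    rw [bond_trans φ (Nat.le_add_left m b) h3, bond_phi]
    show bond φ _ (φ (b+m) (sec (b+m) (u m))) = _
    rw [hsec]
  refine ⟨⟨x, hx⟩, ?_⟩
  show bond φ (Nat.le_add_left b b) (u b) = w
  exact hu b _


section Scales

variable (G : ℕ → Type*) [∀ i, Group (G i)] [∀ i, Fintype (G i)]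

/-- The scale sequence: levels growing fast enough for the measure estimates. -/
def sc : ℕ → ℕ
  | 0 => 0
  | n + 1 => max (sc n + 1) (2 ^ n * (2 * Fintype.card (G (sc n)) + 1) ^ n)

lemma sc_strictMono : StrictMono (sc G) :=
  strictMono_nat_of_lt_succ fun n =>
    lt_of_lt_of_le (Nat.lt_succ_self _) (le_max_left _ _)

lemma sc_le {a b : ℕ} (h : a ≤ b) : sc G a ≤ sc G b := (sc_strictMono G).monotone h

lemma sc_ge_self (n : ℕ) : n ≤ sc G n := (sc_strictMono G).le_apply

variable {G}

lemma card_gt (hcard : ∀ i, Fintype.card (G i) < Fintype.card (G (i + 1))) (m : ℕ) :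
    m < Fintype.card (G m) := by
  induction m with
  | zero => exact Fintype.card_pos
  | succ m ih => exact lt_of_le_of_lt ih (hcard m)

lemma card_sc (hcard : ∀ i, Fintype.card (G i) < Fintype.card (G (i + 1))) (n : ℕ) :
    2 ^ n * (2 * Fintype.card (G (sc G n)) + 1) ^ n ≤ Fintype.card (G (sc G (n + 1))) :=
  le_trans (le_max_right _ _) (le_of_lt (card_gt hcard (sc G (n+1))))

end Scales

section Cyl

variable {G : ℕ → Type*} [∀ i, Group (G i)] [∀ i, Fintype (G i)]
  [∀ i, TopologicalSpace (G i)] [∀ i, DiscreteTopology (G i)]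
  (φ : ∀ i, G (i + 1) →* G i)

/-- Cylinder: threads with prescribed value at level `b`. -/
def cyl (b : ℕ) (w : G b) : Set (inverseLimit φ) := {x | (x : ∀ i, G i) b = w}

lemma continuous_eval (b : ℕ) : Continuous (fun x : (inverseLimit φ) => (x : ∀ i, G i) b) :=
  (continuous_apply b).comp continuous_subtype_val

lemma isOpen_cyl (b : ℕ) (w : G b) : IsOpen (cyl φ b w) :=
  (continuous_eval φ b).isOpen_preimage {w} (isOpen_discrete _)

variable [MeasurableSpace (inverseLimit φ)] [BorelSpace (inverseLimit φ)]

lemma measurableSet_cyl (b : ℕ) (w : G b) : MeasurableSet (cyl φ b w) :=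
  (isOpen_cyl φ b w).measurableSet

instance topGrpAux : ∀ i, IsTopologicalGroup (G i) := fun _ =>
  { continuous_mul := continuous_of_discreteTopology
    continuous_inv := continuous_of_discreteTopology }

lemma cyl_measure (hsurj : ∀ i, Function.Surjective (φ i))
    (μ : Measure (inverseLimit φ)) [IsProbabilityMeasure μ] [μ.IsMulLeftInvariant]
    (b : ℕ) (w : G b) :
    μ (cyl φ b w) = (Fintype.card (G b) : ℝ≥0∞)⁻¹ := by
  classical
  have key : ∀ w' : G b, μ (cyl φ b w') = μ (cyl φ b w) := by
    intro w'
    obtain ⟨g, hg⟩ := exists_thread φ hsurj b (w' * w⁻¹)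
    have hpre : (fun x : (inverseLimit φ) => g * x) ⁻¹' (cyl φ b w') = cyl φ b w := by
      ext x
      simp only [cyl, Set.mem_preimage, Set.mem_setOf_eq, Subgroup.coe_mul, Pi.mul_apply, hg]
      constructor
      · intro h
        have := congrArg (fun z => (w' * w⁻¹)⁻¹ * z) h
        simpa [mul_assoc] using this
      · intro h; rw [h]; group
    rw [← hpre, measure_preimage_mul]
  have hdisj : Pairwise (Function.onFun Disjoint fun w' => cyl φ b w') := by
    intro w1 w2 h12
    apply Set.disjoint_left.mpr
    intro x hx1 hx2
    exact h12 (hx1.symm.trans hx2)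
  have huniv : (⋃ w' : G b, cyl φ b w') = Set.univ := by
    rw [Set.iUnion_eq_univ_iff]
    exact fun x => ⟨(x : ∀ i, G i) b, rfl⟩
  have hsum : ∑ w' : G b, μ (cyl φ b w') = 1 := by
    calc ∑ w' : G b, μ (cyl φ b w') = ∑' w' : G b, μ (cyl φ b w') := (tsum_fintype _).symm
      _ = μ (⋃ w' : G b, cyl φ b w') :=
          (measure_iUnion hdisj (fun w' => measurableSet_cyl φ b w')).symm
      _ = 1 := by rw [huniv, measure_univ]
  have hsum2 : (Fintype.card (G b) : ℝ≥0∞) * μ (cyl φ b w) = 1 := by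
    rw [← hsum, Finset.sum_congr rfl (fun w' _ => key w')]
    simp [Finset.card_univ, ]
  have hc0 : (Fintype.card (G b) : ℝ≥0∞) ≠ 0 := by
    simp [Fintype.card_ne_zero]
  have hct : (Fintype.card (G b) : ℝ≥0∞) ≠ ⊤ := ENNReal.natCast_ne_top _
  calc μ (cyl φ b w) = ((Fintype.card (G b) : ℝ≥0∞)⁻¹ * (Fintype.card (G b) : ℝ≥0∞))
        * μ (cyl φ b w) := by rw [ENNReal.inv_mul_cancel hc0 hct, one_mul]
    _ = (Fintype.card (G b) : ℝ≥0∞)⁻¹ := by rw [mul_assoc, hsum2, mul_one]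

end Cyl

section FlatS

variable {G : ℕ → Type*} [∀ i, Group (G i)] [∀ i, Fintype (G i)]
  [∀ i, TopologicalSpace (G i)] [∀ i, DiscreteTopology (G i)]
  (φ : ∀ i, G (i + 1) →* G i) (hsurj : ∀ i, Function.Surjective (φ i))

/-- Section of the composite bonding map between consecutive scale levels. -/
noncomputable def scSec (n : ℕ) : G (sc G n) → G (sc G (n + 1)) :=
  Function.surjInv (bond_surj φ hsurj ((sc_strictMono G).monotone n.le_succ))

lemma scSec_spec (n : ℕ) (v : G (sc G n)) :
    bond φ ((sc_strictMono G).monotone n.le_succ) (scSec φ hsurj n v) = v :=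
  Function.surjInv_eq _ v

/-- The symmetric "lazy" generating set at scale step `n`. -/
noncomputable def Bset (n : ℕ) : Set (G (sc G (n + 1))) :=
  Set.range (scSec φ hsurj n) ∪ (Set.range (scSec φ hsurj n))⁻¹ ∪ {1}

lemma one_mem_Bset (n : ℕ) : (1 : G (sc G (n+1))) ∈ Bset φ hsurj n :=
  Set.mem_union_right _ rfl

lemma Bset_inv (n : ℕ) : (Bset φ hsurj n)⁻¹ = Bset φ hsurj n := by
  unfold Bset
  rw [Set.union_inv, Set.union_inv, Set.inv_singleton, inv_one, inv_inv,
    Set.union_comm (Set.range (scSec φ hsurj n))⁻¹ (Set.range (scSec φ hsurj n))]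

lemma Bset_pow_inv (n s : ℕ) : ((Bset φ hsurj n) ^ s)⁻¹ = (Bset φ hsurj n) ^ s := by
  rw [← inv_pow, Bset_inv]

/-- The flat sets. -/
noncomputable def Flat (s n : ℕ) : Set (inverseLimit φ) :=
  {x | (x : ∀ i, G i) (sc G (n + 1)) ∈ (Bset φ hsurj n) ^ s}

/-- A fixed nonprincipal ultrafilter on `ℕ`. -/
noncomputable def UF : Ultrafilter ℕ := Ultrafilter.of Filter.cofinite

lemma UF_infinite {A : Set ℕ} (hA : A ∈ UF) : A.Infinite := by
  by_contra h
  rw [Set.not_infinite] at h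
  rename' h => hfin
  have h1 : Aᶜ ∈ Filter.cofinite := by
    rw [Filter.mem_cofinite, compl_compl]; exact hfin
  have h2 : Aᶜ ∈ (UF : Filter ℕ) := Ultrafilter.of_le Filter.cofinite h1
  have h3 : A ∩ Aᶜ ∈ (UF : Filter ℕ) := Filter.inter_mem hA h2
  rw [Set.inter_compl_self] at h3
  exact Filter.empty_notMem _ h3

/-- The null non-meager subgroup. -/
noncomputable def SG : Subgroup (inverseLimit φ) where
  carrier := {x | ∃ s : ℕ, {n | x ∈ Flat φ hsurj s n} ∈ UF}
  one_mem' := by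
    refine ⟨0, ?_⟩
    have : {n | (1 : (inverseLimit φ)) ∈ Flat φ hsurj 0 n} = Set.univ := by
      ext n
      simp only [Set.mem_setOf_eq, Flat, pow_zero, Set.mem_univ, iff_true]
      show ((1 : (inverseLimit φ)) : ∀ i, G i) (sc G (n+1)) ∈ (1 : Set (G (sc G (n+1))))
      simp
    rw [this]; exact Filter.univ_mem
  mul_mem' := by
    rintro x y ⟨s, hs⟩ ⟨t, ht⟩
    refine ⟨s + t, Filter.mem_of_superset (Filter.inter_mem hs ht) ?_⟩
    rintro n ⟨hxn, hyn⟩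
    simp only [Set.mem_setOf_eq, Flat] at hxn hyn ⊢
    rw [Subgroup.coe_mul, Pi.mul_apply, pow_add]
    exact Set.mul_mem_mul hxn hyn
  inv_mem' := by
    rintro x ⟨s, hs⟩
    refine ⟨s, Filter.mem_of_superset hs ?_⟩
    intro n hxn
    simp only [Set.mem_setOf_eq, Flat] at hxn ⊢
    rw [Subgroup.coe_inv, Pi.inv_apply, ← Bset_pow_inv φ hsurj n s]
    exact Set.inv_mem_inv.mpr hxn

end FlatS

section Null

variable {G : ℕ → Type*} [∀ i, Group (G i)] [∀ i, Fintype (G i)]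
  [∀ i, TopologicalSpace (G i)] [∀ i, DiscreteTopology (G i)]
  (φ : ∀ i, G (i + 1) →* G i) (hsurj : ∀ i, Function.Surjective (φ i))
  (hcard : ∀ i, Fintype.card (G i) < Fintype.card (G (i + 1)))

lemma ncard_Bset (n : ℕ) :
    (Bset φ hsurj n).ncard ≤ 2 * Fintype.card (G (sc G n)) + 1 := by
  have h1 : (Set.range (scSec φ hsurj n)).ncard ≤ Fintype.card (G (sc G n)) := by
    rw [← Nat.card_coe_set_eq, ← Nat.card_eq_fintype_card]
    exact Finite.card_range_le _
  have h2 : ((Set.range (scSec φ hsurj n))⁻¹).ncard ≤ Fintype.card (G (sc G n)) := by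
    rw [Set.inv_range, ← Nat.card_coe_set_eq, ← Nat.card_eq_fintype_card]
    exact Finite.card_range_le _
  calc (Bset φ hsurj n).ncard
      ≤ (Set.range (scSec φ hsurj n) ∪ (Set.range (scSec φ hsurj n))⁻¹).ncard + ({1} : Set (G (sc G (n+1)))).ncard :=
        Set.ncard_union_le _ _
    _ ≤ ((Set.range (scSec φ hsurj n)).ncard + ((Set.range (scSec φ hsurj n))⁻¹).ncard) + 1 := by
        rw [Set.ncard_singleton]
        exact Nat.add_le_add_right (Set.ncard_union_le _ _) 1
    _ ≤ 2 * Fintype.card (G (sc G n)) + 1 := by omega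

lemma ncard_Bpow (n s : ℕ) :
    ((Bset φ hsurj n) ^ s).ncard ≤ (2 * Fintype.card (G (sc G n)) + 1) ^ s := by
  induction s with
  | zero => simp [← Set.singleton_one]
  | succ s ih =>
    rw [pow_succ, pow_succ]
    calc ((Bset φ hsurj n) ^ s * Bset φ hsurj n).ncard
        ≤ ((Bset φ hsurj n) ^ s).ncard * (Bset φ hsurj n).ncard := by
          rw [← Nat.card_coe_set_eq, ← Nat.card_coe_set_eq, ← Nat.card_coe_set_eq]
          exact Set.natCard_mul_le
      _ ≤ _ := Nat.mul_le_mul ih (ncard_Bset φ hsurj n)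

variable [MeasurableSpace (inverseLimit φ)] [BorelSpace (inverseLimit φ)]
  (μ : Measure (inverseLimit φ)) [IsProbabilityMeasure μ] [μ.IsMulLeftInvariant]

include hcard in
lemma measure_flat_le {s n : ℕ} (hsn : s ≤ n) :
    μ (Flat φ hsurj s n) ≤ (2⁻¹ : ℝ≥0∞) ^ n := by
  classical
  set b := sc G (n + 1) with hb
  set K := 2 * Fintype.card (G (sc G n)) + 1 with hK
  set T := ((Bset φ hsurj n) ^ s).toFinite.toFinset with hT
  have hflat : Flat φ hsurj s n = ⋃ w ∈ T, cyl φ b w := by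
    ext x
    simp only [Flat, Set.mem_setOf_eq, Set.mem_iUnion, cyl, Set.Finite.mem_toFinset, hT]
    constructor
    · intro h; exact ⟨_, h, rfl⟩
    · rintro ⟨w, hw, hxw⟩; rwa [hxw]
  have h1 : μ (Flat φ hsurj s n) ≤ (T.card : ℝ≥0∞) * (Fintype.card (G b) : ℝ≥0∞)⁻¹ := by
    rw [hflat]
    calc μ (⋃ w ∈ T, cyl φ b w) ≤ ∑ w ∈ T, μ (cyl φ b w) := measure_biUnion_finset_le T _
      _ = (T.card : ℝ≥0∞) * (Fintype.card (G b) : ℝ≥0∞)⁻¹ := by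
          rw [Finset.sum_congr rfl (fun w _ => cyl_measure φ hsurj μ b w), Finset.sum_const,
            nsmul_eq_mul]
  have hcard : T.card * 2 ^ n ≤ Fintype.card (G b) := by
    have e1 : T.card = ((Bset φ hsurj n) ^ s).ncard :=
      (Set.ncard_eq_toFinset_card _ _).symm
    have e2 : T.card ≤ K ^ n := by
      rw [e1]
      exact le_trans (ncard_Bpow φ hsurj n s)
        (Nat.pow_le_pow_right (by omega) hsn)
    calc T.card * 2 ^ n ≤ K ^ n * 2 ^ n := Nat.mul_le_mul_right _ e2
      _ = 2 ^ n * K ^ n := Nat.mul_comm _ _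
      _ ≤ Fintype.card (G b) := card_sc hcard n
  have hc0 : (Fintype.card (G b) : ℝ≥0∞) ≠ 0 := by simp [Fintype.card_ne_zero]
  have hct : (Fintype.card (G b) : ℝ≥0∞) ≠ ⊤ := ENNReal.natCast_ne_top _
  have h2 : (T.card : ℝ≥0∞) * (Fintype.card (G b) : ℝ≥0∞)⁻¹ ≤ ((2 : ℝ≥0∞) ^ n)⁻¹ := by
    rw [ENNReal.le_inv_iff_mul_le]
    calc (T.card : ℝ≥0∞) * (Fintype.card (G b) : ℝ≥0∞)⁻¹ * 2 ^ n
        = ((T.card : ℝ≥0∞) * 2 ^ n) * (Fintype.card (G b) : ℝ≥0∞)⁻¹ := by ring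
      _ ≤ (Fintype.card (G b) : ℝ≥0∞) * (Fintype.card (G b) : ℝ≥0∞)⁻¹ := by
          apply mul_le_mul_left
          calc (T.card : ℝ≥0∞) * 2 ^ n = ((T.card * 2 ^ n : ℕ) : ℝ≥0∞) := by push_cast; ring
            _ ≤ (Fintype.card (G b) : ℝ≥0∞) := by exact_mod_cast Nat.cast_le.mpr hcard
      _ = 1 := ENNReal.mul_inv_cancel hc0 hct
  calc μ (Flat φ hsurj s n) ≤ ((2 : ℝ≥0∞) ^ n)⁻¹ := le_trans h1 h2
    _ = (2⁻¹ : ℝ≥0∞) ^ n := ENNReal.inv_pow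

include hcard in
lemma measure_flat_le' (s n : ℕ) :
    μ (Flat φ hsurj s n) ≤ (2 : ℝ≥0∞) ^ s * (2⁻¹ : ℝ≥0∞) ^ n := by
  rcases le_or_gt s n with h | h
  · calc μ (Flat φ hsurj s n) ≤ (2⁻¹ : ℝ≥0∞) ^ n := measure_flat_le φ hsurj hcard μ h
      _ ≤ (2 : ℝ≥0∞) ^ s * (2⁻¹ : ℝ≥0∞) ^ n := by
        apply le_mul_of_one_le_left (zero_le)
        calc (1 : ℝ≥0∞) = 1 ^ s := (one_pow s).symm
          _ ≤ 2 ^ s := pow_le_pow_left₀ (zero_le) one_le_two s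
  · calc μ (Flat φ hsurj s n) ≤ 1 := prob_le_one
      _ = ((2 : ℝ≥0∞) * 2⁻¹) ^ n := by rw [ENNReal.mul_inv_cancel two_ne_zero ENNReal.ofNat_ne_top, one_pow]
      _ = (2 : ℝ≥0∞) ^ n * (2⁻¹ : ℝ≥0∞) ^ n := mul_pow _ _ n
      _ ≤ (2 : ℝ≥0∞) ^ s * (2⁻¹ : ℝ≥0∞) ^ n :=
          mul_le_mul_left (pow_le_pow_right₀ one_le_two h.le) _

include hcard in
lemma SG_null : μ ((SG φ hsurj : Subgroup (inverseLimit φ)) : Set (inverseLimit φ)) = 0 := by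
  have hsub : ((SG φ hsurj : Subgroup (inverseLimit φ)) : Set (inverseLimit φ)) ⊆
      ⋃ s : ℕ, Filter.limsup (Flat φ hsurj s) Filter.cofinite := by
    rintro x ⟨s, hs⟩
    apply Set.mem_iUnion.mpr
    refine ⟨s, ?_⟩
    rw [Filter.cofinite.limsup_set_eq]
    exact UF_infinite hs
  apply measure_mono_null hsub
  apply measure_iUnion_null
  intro s
  apply measure_limsup_cofinite_eq_zero
  have hle : ∑' n, μ (Flat φ hsurj s n) ≤ (2 : ℝ≥0∞) ^ s * 2 := by
    calc ∑' n, μ (Flat φ hsurj s n) ≤ ∑' n, (2 : ℝ≥0∞) ^ s * (2⁻¹ : ℝ≥0∞) ^ n :=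
        ENNReal.tsum_le_tsum (measure_flat_le' φ hsurj hcard μ s)
      _ = (2 : ℝ≥0∞) ^ s * ∑' n, (2⁻¹ : ℝ≥0∞) ^ n := ENNReal.tsum_mul_left
      _ = (2 : ℝ≥0∞) ^ s * 2 := by
          rw [ENNReal.tsum_geometric, ENNReal.one_sub_inv_two, inv_inv]
  exact ne_top_of_le_ne_top
    (ENNReal.mul_ne_top (ENNReal.pow_ne_top ENNReal.ofNat_ne_top) ENNReal.ofNat_ne_top) hle

end Null

section NonMeager

variable {G : ℕ → Type*} [∀ i, Group (G i)] [∀ i, Fintype (G i)]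
  [∀ i, TopologicalSpace (G i)] [∀ i, DiscreteTopology (G i)]
  (φ : ∀ i, G (i + 1) →* G i) (hsurj : ∀ i, Function.Surjective (φ i))

/-- Iterated lazy lifting along scale levels. -/
noncomputable def flatRun {a b : ℕ} (h : a ≤ b) : G (sc G a) → G (sc G b) :=
  Nat.leRecOn (C := fun k => G (sc G k)) h (fun {k} v => scSec φ hsurj k v)

lemma flatRun_self {a : ℕ} (h : a ≤ a) (v : G (sc G a)) : flatRun φ hsurj h v = v :=
  Nat.leRecOn_self (C := fun k => G (sc G k)) (next := fun {k} v => scSec φ hsurj k v) v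

lemma flatRun_succ {a b : ℕ} (h1 : a ≤ b) {h2 : a ≤ b + 1} (v : G (sc G a)) :
    flatRun φ hsurj h2 v = scSec φ hsurj b (flatRun φ hsurj h1 v) :=
  Nat.leRecOn_succ (C := fun k => G (sc G k)) h1 v

lemma flatRun_proj {a j : ℕ} (haj : a ≤ j) :
    ∀ {b : ℕ} (hjb : j ≤ b) (v : G (sc G a)),
      bond φ (sc_le G hjb) (flatRun φ hsurj (haj.trans hjb) v) = flatRun φ hsurj haj v := by
  intro b hjb
  induction b, hjb using Nat.le_induction with
  | base =>
    intro v
    rw [bond_self]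
  | succ b hjb ih =>
    intro v
    rw [flatRun_succ φ hsurj (haj.trans hjb),
      bond_trans φ (sc_le G hjb) (sc_le G b.le_succ), scSec_spec]
    exact ih v

include hsurj in
/-- The dodging lemma: inside any cylinder there is a deeper cylinder avoiding a given
closed nowhere dense set. -/
lemma exists_dodge {D : Set (inverseLimit φ)} (hcl : IsClosed D) (hnd : IsNowhereDense D)
    (a : ℕ) (v : G a) :
    ∃ (m : ℕ) (hm : a ≤ m) (w : G m), bond φ hm w = v ∧
      ∀ x : (inverseLimit φ), (x : ∀ i, G i) m = w → x ∉ D := by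
  obtain ⟨y, hy⟩ := exists_thread φ hsurj a v
  have hU : IsOpen (cyl φ a v) := isOpen_cyl φ a v
  have hne : ¬ (cyl φ a v ⊆ D) := by
    intro hsubset
    have h1 : cyl φ a v ⊆ interior D := hU.subset_interior_iff.mpr hsubset
    have h2 : interior D = ∅ := hcl.isNowhereDense_iff.mp hnd
    rw [h2] at h1
    exact h1 (show y ∈ cyl φ a v from hy)
  obtain ⟨z, hz1, hz2⟩ := Set.not_subset.mp hne
  have hDc : IsOpen Dᶜ := hcl.isOpen_compl
  rw [isOpen_induced_iff] at hDc
  obtain ⟨O, hO, hOeq⟩ := hDc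
  have hzO : (z : ∀ i, G i) ∈ O := by
    have : z ∈ Dᶜ := hz2
    rw [← hOeq] at this
    exact this
  rw [isOpen_pi_iff] at hO
  obtain ⟨I, u, hu, hpi⟩ := hO (z : ∀ i, G i) hzO
  refine ⟨max a (I.sup id), le_max_left a _, (z : ∀ i, G i) (max a (I.sup id)), ?_, ?_⟩
  · rw [thread_proj φ z.2 (le_max_left a _)]
    exact hz1
  · intro x hxm hxD
    have hxpi : (x : ∀ i, G i) ∈ (I : Set ℕ).pi u := by
      intro i hi
      have him : i ≤ max a (I.sup id) :=
        le_trans (Finset.le_sup (f := id) hi) (le_max_right a _)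
      have e1 : (x : ∀ i, G i) i = (z : ∀ i, G i) i := by
        rw [← thread_proj φ x.2 him, ← thread_proj φ z.2 him, hxm]
      rw [e1]
      exact (hu i hi).2
    have hxO : (x : ∀ i, G i) ∈ O := hpi hxpi
    have : x ∈ Dᶜ := by rw [← hOeq]; exact hxO
    exact this hxD

variable (D : ℕ → Set (inverseLimit φ))
  (hD : ∀ k, IsClosed (D k) ∧ IsNowhereDense (D k))

/-- Level of the dodging cylinder. -/
noncomputable def dLev (k a : ℕ) (v : G a) : ℕ :=
  (exists_dodge φ hsurj (hD k).1 (hD k).2 a v).choose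

lemma dLev_le (k a : ℕ) (v : G a) : a ≤ dLev φ hsurj D hD k a v :=
  (exists_dodge φ hsurj (hD k).1 (hD k).2 a v).choose_spec.choose

/-- Value of the dodging cylinder. -/
noncomputable def dVal (k a : ℕ) (v : G a) : G (dLev φ hsurj D hD k a v) :=
  (exists_dodge φ hsurj (hD k).1 (hD k).2 a v).choose_spec.choose_spec.choose

lemma dVal_spec (k a : ℕ) (v : G a) :
    bond φ (dLev_le φ hsurj D hD k a v) (dVal φ hsurj D hD k a v) = v ∧
      ∀ x : (inverseLimit φ),
        (x : ∀ i, G i) (dLev φ hsurj D hD k a v) = dVal φ hsurj D hD k a v → x ∉ D k :=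
  (exists_dodge φ hsurj (hD k).1 (hD k).2 a v).choose_spec.choose_spec.choose_spec

/-- Block boundaries. -/
noncomputable def dseq : ℕ → ℕ
  | 0 => 0
  | r + 1 => dseq r + 1 +
      Finset.univ.sup (fun v : G (sc G (dseq r)) => dLev φ hsurj D hD (r / 2) (sc G (dseq r)) v)

lemma dseq_strictMono : StrictMono (dseq φ hsurj D hD) :=
  strictMono_nat_of_lt_succ fun r => by
    show dseq φ hsurj D hD r < dseq φ hsurj D hD r + 1 + _
    omega

lemma dseq_ge (r : ℕ) : r ≤ dseq φ hsurj D hD r := (dseq_strictMono φ hsurj D hD).le_apply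

lemma dLev_le_dseq (r : ℕ) (v : G (sc G (dseq φ hsurj D hD r))) :
    dLev φ hsurj D hD (r / 2) (sc G (dseq φ hsurj D hD r)) v ≤ dseq φ hsurj D hD (r + 1) := by
  have h1 : dLev φ hsurj D hD (r / 2) (sc G (dseq φ hsurj D hD r)) v ≤
      Finset.univ.sup (fun v : G (sc G (dseq φ hsurj D hD r)) =>
        dLev φ hsurj D hD (r / 2) (sc G (dseq φ hsurj D hD r)) v) :=
    Finset.le_sup (Finset.mem_univ v)
  show _ ≤ dseq φ hsurj D hD r + 1 + _
  omega

lemma dLev_le_sc (r : ℕ) (v : G (sc G (dseq φ hsurj D hD r))) :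
    dLev φ hsurj D hD (r / 2) (sc G (dseq φ hsurj D hD r)) v ≤ sc G (dseq φ hsurj D hD (r + 1)) :=
  le_trans (dLev_le_dseq φ hsurj D hD r v) (sc_ge_self G _)

variable (p : ℕ)

/-- The recursive construction of values at block boundaries. -/
noncomputable def Vv : (r : ℕ) → G (sc G (dseq φ hsurj D hD r))
  | 0 => 1
  | r + 1 =>
    if r % 2 = p then
      Function.surjInv (bond_surj φ hsurj (dLev_le_sc φ hsurj D hD r (Vv r)))
        (dVal φ hsurj D hD (r / 2) (sc G (dseq φ hsurj D hD r)) (Vv r))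
    else
      flatRun φ hsurj ((dseq_strictMono φ hsurj D hD).monotone r.le_succ) (Vv r)

lemma Vv_step (r : ℕ) :
    bond φ (sc_le G ((dseq_strictMono φ hsurj D hD).monotone r.le_succ))
      (Vv φ hsurj D hD p (r + 1)) = Vv φ hsurj D hD p r := by
  by_cases hmode : r % 2 = p
  · rw [show Vv φ hsurj D hD p (r + 1) =
        Function.surjInv (bond_surj φ hsurj (dLev_le_sc φ hsurj D hD r (Vv φ hsurj D hD p r)))
          (dVal φ hsurj D hD (r / 2) (sc G (dseq φ hsurj D hD r)) (Vv φ hsurj D hD p r))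
      from by rw [Vv]; rw [if_pos hmode]]
    rw [bond_trans φ (dLev_le φ hsurj D hD (r / 2) _ (Vv φ hsurj D hD p r))
      (dLev_le_sc φ hsurj D hD r (Vv φ hsurj D hD p r)),
      Function.surjInv_eq (bond_surj φ hsurj (dLev_le_sc φ hsurj D hD r (Vv φ hsurj D hD p r)))]
    exact (dVal_spec φ hsurj D hD (r / 2) _ (Vv φ hsurj D hD p r)).1
  · rw [show Vv φ hsurj D hD p (r + 1) =
        flatRun φ hsurj ((dseq_strictMono φ hsurj D hD).monotone r.le_succ)
          (Vv φ hsurj D hD p r)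
      from by rw [Vv]; rw [if_neg hmode]]
    rw [show ((dseq_strictMono φ hsurj D hD).monotone r.le_succ : dseq φ hsurj D hD r ≤ dseq φ hsurj D hD (r+1)) =
      ((le_refl (dseq φ hsurj D hD r)).trans ((dseq_strictMono φ hsurj D hD).monotone r.le_succ)) from rfl]
    rw [flatRun_proj φ hsurj (le_refl _) ((dseq_strictMono φ hsurj D hD).monotone r.le_succ)]
    exact flatRun_self φ hsurj _ _

lemma Vv_proj {r r' : ℕ} (h : r ≤ r') :
    bond φ (sc_le G ((dseq_strictMono φ hsurj D hD).monotone h))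
      (Vv φ hsurj D hD p r') = Vv φ hsurj D hD p r := by
  induction r', h using Nat.le_induction with
  | base => exact bond_self φ _ _
  | succ r' hrr ih =>
    rw [bond_trans φ (sc_le G ((dseq_strictMono φ hsurj D hD).monotone hrr))
      (sc_le G ((dseq_strictMono φ hsurj D hD).monotone r'.le_succ)),
      Vv_step φ hsurj D hD p r']
    exact ih

/-- Values at every scale level. -/
noncomputable def Ww (n : ℕ) : G (sc G n) :=
  bond φ (sc_le G (dseq_ge φ hsurj D hD n)) (Vv φ hsurj D hD p n)

lemma VW {n r : ℕ} (h : n ≤ dseq φ hsurj D hD r) :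
    bond φ (sc_le G h) (Vv φ hsurj D hD p r) = Ww φ hsurj D hD p n := by
  rcases le_or_gt n r with hnr | hrn
  · rw [bond_trans φ (sc_le G (dseq_ge φ hsurj D hD n))
      (sc_le G ((dseq_strictMono φ hsurj D hD).monotone hnr)),
      Vv_proj φ hsurj D hD p hnr]
    rfl
  · have h1 : dseq φ hsurj D hD r ≤ dseq φ hsurj D hD n :=
      (dseq_strictMono φ hsurj D hD).monotone hrn.le
    rw [← Vv_proj φ hsurj D hD p hrn.le, ← bond_trans φ (sc_le G h) (sc_le G h1)]
    rfl

lemma Wproj {n n' : ℕ} (h : n ≤ n') :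
    bond φ (sc_le G h) (Ww φ hsurj D hD p n') = Ww φ hsurj D hD p n := by
  rw [show Ww φ hsurj D hD p n' =
    bond φ (sc_le G (dseq_ge φ hsurj D hD n')) (Vv φ hsurj D hD p n') from rfl,
    ← bond_trans φ (sc_le G h) (sc_le G (dseq_ge φ hsurj D hD n'))]
  exact VW φ hsurj D hD p (h.trans (dseq_ge φ hsurj D hD n'))

/-- The generic thread. -/
noncomputable def xx : (inverseLimit φ) :=
  ⟨fun m => bond φ (sc_ge_self G m) (Ww φ hsurj D hD p m), by
    intro m
    have e1 := bond_trans φ m.le_succ (sc_ge_self G (m+1))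
      (m.le_succ.trans (sc_ge_self G (m+1))) (Ww φ hsurj D hD p (m+1))
    rw [bond_phi φ m.le_succ] at e1
    show φ m (bond φ (sc_ge_self G (m+1)) (Ww φ hsurj D hD p (m+1))) = _
    rw [← e1, bond_trans φ (sc_ge_self G m) (sc_le G m.le_succ)
        (m.le_succ.trans (sc_ge_self G (m+1))) (Ww φ hsurj D hD p (m+1)),
      Wproj φ hsurj D hD p m.le_succ]⟩

lemma xx_sc (n : ℕ) : ((xx φ hsurj D hD p : (inverseLimit φ)) : ∀ i, G i) (sc G n)
    = Ww φ hsurj D hD p n := by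
  show bond φ (sc_ge_self G (sc G n)) (Ww φ hsurj D hD p (sc G n)) = _
  exact Wproj φ hsurj D hD p (sc_ge_self G n)

/-- Block index of a scale step. -/
noncomputable def bl (n : ℕ) : ℕ :=
  Nat.findGreatest (fun r => dseq φ hsurj D hD r ≤ n) n

lemma bl_le (n : ℕ) : dseq φ hsurj D hD (bl φ hsurj D hD n) ≤ n :=
  Nat.findGreatest_spec (P := fun r => dseq φ hsurj D hD r ≤ n) (Nat.zero_le n)
    (by show dseq φ hsurj D hD 0 ≤ n; rw [dseq]; omega)

lemma bl_lt (n : ℕ) : n < dseq φ hsurj D hD (bl φ hsurj D hD n + 1) := by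
  by_contra hcon
  push_neg at hcon
  have h1 : bl φ hsurj D hD n + 1 ≤ n := le_trans (dseq_ge φ hsurj D hD _) hcon
  exact Nat.findGreatest_is_greatest (P := fun r => dseq φ hsurj D hD r ≤ n)
    (Nat.lt_succ_self _) h1 hcon

lemma Ww_flat {n : ℕ} (hmode : (bl φ hsurj D hD n) % 2 ≠ p) :
    Ww φ hsurj D hD p (n + 1) = scSec φ hsurj n (Ww φ hsurj D hD p n) := by
  set r := bl φ hsurj D hD n with hrdef
  have h1 : dseq φ hsurj D hD r ≤ n := bl_le φ hsurj D hD n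
  have h2 : n < dseq φ hsurj D hD (r + 1) := bl_lt φ hsurj D hD n
  have hVr : Vv φ hsurj D hD p (r + 1) =
      flatRun φ hsurj ((dseq_strictMono φ hsurj D hD).monotone r.le_succ)
        (Vv φ hsurj D hD p r) := by
    rw [Vv]; rw [if_neg hmode]
  have key : ∀ (j : ℕ) (hj1 : dseq φ hsurj D hD r ≤ j) (hj2 : j ≤ dseq φ hsurj D hD (r + 1)),
      Ww φ hsurj D hD p j = flatRun φ hsurj hj1 (Vv φ hsurj D hD p r) := by
    intro j hj1 hj2
    rw [← VW φ hsurj D hD p hj2, hVr,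
      show ((dseq_strictMono φ hsurj D hD).monotone r.le_succ :
        dseq φ hsurj D hD r ≤ dseq φ hsurj D hD (r+1)) = hj1.trans hj2 from rfl,
      flatRun_proj φ hsurj hj1 hj2]
  rw [key n h1 h2.le, key (n+1) (h1.trans n.le_succ) h2, flatRun_succ φ hsurj h1]

lemma xx_avoids (hp : p < 2) (k : ℕ) : xx φ hsurj D hD p ∉ D k := by
  set r := 2 * k + p with hrdef
  have hmode : r % 2 = p := by omega
  have hdiv : r / 2 = k := by omega
  set a := sc G (dseq φ hsurj D hD r) with hadef
  set v := Vv φ hsurj D hD p r with hvdef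
  have hVr : Vv φ hsurj D hD p (r + 1) =
      Function.surjInv (bond_surj φ hsurj (dLev_le_sc φ hsurj D hD r v))
        (dVal φ hsurj D hD (r / 2) a v) := by
    rw [Vv]; rw [if_pos hmode]
  have hWV : Ww φ hsurj D hD p (dseq φ hsurj D hD (r + 1)) = Vv φ hsurj D hD p (r + 1) := by
    rw [← VW φ hsurj D hD p (le_refl (dseq φ hsurj D hD (r + 1))), bond_self]
  have e1 : ((xx φ hsurj D hD p : (inverseLimit φ)) : ∀ i, G i)
      (dLev φ hsurj D hD (r / 2) a v) = dVal φ hsurj D hD (r / 2) a v := by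
    rw [← thread_proj φ (xx φ hsurj D hD p).2 (dLev_le_sc φ hsurj D hD r v),
      xx_sc, hWV, hVr,
      Function.surjInv_eq (bond_surj φ hsurj (dLev_le_sc φ hsurj D hD r v))]
  have := (dVal_spec φ hsurj D hD (r / 2) a v).2 _ e1
  rwa [hdiv] at this

end NonMeager

section Final

variable {G : ℕ → Type*} [∀ i, Group (G i)] [∀ i, Fintype (G i)]
  [∀ i, TopologicalSpace (G i)] [∀ i, DiscreteTopology (G i)]
  (φ : ∀ i, G (i + 1) →* G i) (hsurj : ∀ i, Function.Surjective (φ i))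

include hsurj in
lemma SG_nonmeager :
    ¬ IsMeagre ((SG φ hsurj : Subgroup (inverseLimit φ)) : Set (inverseLimit φ)) := by
  classical
  intro hM
  rw [isMeagre_iff_countable_union_isNowhereDense] at hM
  obtain ⟨𝒮, hnwd, hcnt, hsub⟩ := hM
  rcases 𝒮.eq_empty_or_nonempty with h𝒮 | h𝒮
  · rw [h𝒮] at hsub
    simpa using hsub (SG φ hsurj).one_mem
  obtain ⟨f, hf⟩ := hcnt.exists_eq_range h𝒮
  set D : ℕ → Set (inverseLimit φ) := fun k => closure (f k) with hDdef
  have hD : ∀ k, IsClosed (D k) ∧ IsNowhereDense (D k) := fun k =>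
    ⟨isClosed_closure, (hnwd (f k) (by rw [hf]; exact ⟨k, rfl⟩)).closure⟩
  set R0 : Set ℕ := {n | (bl φ hsurj D hD n) % 2 = 0} with hR0def
  set p : ℕ := if R0 ∈ UF then 1 else 0 with hpdef
  have hp2 : p < 2 := by
    by_cases h : R0 ∈ UF <;> simp [hpdef, h]
  have hpU : {n | (bl φ hsurj D hD n) % 2 = p} ∉ UF := by
    by_cases h : R0 ∈ UF
    · intro h1
      have h2 : {n | (bl φ hsurj D hD n) % 2 = p} ∩ R0 ∈ (UF : Filter ℕ) :=
        Filter.inter_mem h1 h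
      have h3 : {n | (bl φ hsurj D hD n) % 2 = p} ∩ R0 = ∅ := by
        ext n
        simp only [hpdef, if_pos h]
        simp only [hR0def, Set.mem_inter_iff, Set.mem_setOf_eq,
          Set.mem_empty_iff_false, iff_false]
        omega
      rw [h3] at h2
      exact Filter.empty_notMem _ h2
    · have : {n | (bl φ hsurj D hD n) % 2 = p} = R0 := by
        ext n; simp only [hpdef, if_neg h]; simp [hR0def]
      rw [this]
      exact h
  have hB : {n | ¬ ((bl φ hsurj D hD n) % 2 = p)} ∈ UF := by
    have : {n | ¬ ((bl φ hsurj D hD n) % 2 = p)} =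
        {n | (bl φ hsurj D hD n) % 2 = p}ᶜ := rfl
    rw [this]
    exact (Ultrafilter.compl_mem_iff_notMem).mpr hpU
  have hxS : xx φ hsurj D hD p ∈ SG φ hsurj := by
    show ∃ s : ℕ, {n | xx φ hsurj D hD p ∈ Flat φ hsurj s n} ∈ UF
    refine ⟨1, Filter.mem_of_superset hB ?_⟩
    intro n hn
    show xx φ hsurj D hD p ∈ Flat φ hsurj 1 n
    simp only [Flat, Set.mem_setOf_eq, pow_one]
    rw [xx_sc φ hsurj D hD p (n + 1), Ww_flat φ hsurj D hD p hn]
    exact Set.mem_union_left _ (Set.mem_union_left _ ⟨Ww φ hsurj D hD p n, rfl⟩)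
  obtain ⟨t, ht𝒮, hxt⟩ := hsub hxS
  rw [hf] at ht𝒮
  obtain ⟨k, rfl⟩ := ht𝒮
  exact xx_avoids φ hsurj D hD p hp2 k (subset_closure hxt)

end Final

end NNM

/-- The inverse limit of a countable inverse system of finite discrete
groups with surjective bonding maps and strictly growing cardinalities admits a subgroup
that is null with respect to the Haar (probability) measure but non-meager. -/
theorem stmt_1 {G : ℕ → Type*} [∀ i, Group (G i)] [∀ i, Fintype (G i)]
    [∀ i, TopologicalSpace (G i)] [∀ i, DiscreteTopology (G i)]
    (φ : ∀ i, G (i + 1) →* G i)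
    (hsurj : ∀ i, Function.Surjective (φ i))
    (hcard : ∀ i, Fintype.card (G i) < Fintype.card (G (i + 1)))
    [MeasurableSpace (inverseLimit φ)] [BorelSpace (inverseLimit φ)]
    (μ : Measure (inverseLimit φ)) [μ.IsHaarMeasure] [IsProbabilityMeasure μ] :
    ∃ S : Subgroup (inverseLimit φ),
      μ (S : Set (inverseLimit φ)) = 0 ∧ ¬ IsMeagre (S : Set (inverseLimit φ)) := by
  exact ⟨NNM.SG φ hsurj, NNM.SG_null φ hsurj hcard μ, NNM.SG_nonmeager φ hsurj⟩
end

section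
/- Let G be a Hausdorff topological group and let 𝔐 be a family of compact normal subgroups of G that is directed with respect to reverse inclusion (for all M, M' ∈ 𝔐 there is M'' ∈ 𝔐 with M'' ⊆ M ∩ M'). Set L := ⋂_{M ∈ 𝔐} M. Then the map ψ: G → lim_{M ∈ 𝔐} G/M, g ↦ (gM)_{M ∈ 𝔐}, into the inverse limit of the quotients G/M (with the canonical projections G/M' → G/M for M' ⊆ M as bonding maps) is a surjective open continuous homomorphism whose kernel is L; consequently the induced map G/L → lim_{M ∈ 𝔐} G/M is an isomorphism of topological groups. -/
/-- The inverse limit of the quotients `G ⧸ M i` along the canonical projections, as a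
subgroup of the product: the threads compatible with all canonical projections
`G ⧸ M i → G ⧸ M j` (for `M i ≤ M j`). -/
def invLimQuot {G : Type*} [Group G] {ι : Type*} (M : ι → Subgroup G)
    [∀ i, (M i).Normal] : Subgroup (∀ i, G ⧸ M i) where
  carrier := {x | ∀ (i j : ι) (h : M i ≤ M j),
    QuotientGroup.map (M i) (M j) (MonoidHom.id G) (fun _ hg => h hg) (x i) = x j}
  one_mem' := fun i j h => by simp
  mul_mem' := fun {a b} ha hb i j h => by
    simp only [Pi.mul_apply, map_mul, ha i j h, hb i j h]
  inv_mem' := fun {a} ha i j h => by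
    simp only [Pi.inv_apply, map_inv, ha i j h]

/-- The canonical homomorphism `ψ : G → lim_{i} G ⧸ M i`, `g ↦ (g M i)_i`. -/
def toInvLimQuot {G : Type*} [Group G] {ι : Type*} (M : ι → Subgroup G)
    [∀ i, (M i).Normal] : G →* invLimQuot M :=
  MonoidHom.codRestrict (Pi.monoidHom fun i => QuotientGroup.mk' (M i)) (invLimQuot M)
    (fun g i j h => rfl)

open scoped Topology

section Aux

/-- Cantor-type: directed family of compact closed sets whose intersection is in an open set
eventually lies in the open set. -/
theorem aux_exists_subset_of_iInter_subset {X : Type*} [TopologicalSpace X] {ι : Type*}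
    [Nonempty ι] (C : ι → Set X) (hd : Directed (· ⊇ ·) C) (hc : ∀ i, IsCompact (C i))
    (hcl : ∀ i, IsClosed (C i)) {U : Set X} (hU : IsOpen U) (h : ⋂ i, C i ⊆ U) :
    ∃ i, C i ⊆ U := by
  by_contra hcon
  push_neg at hcon
  have hne : ∀ i, (C i ∩ Uᶜ).Nonempty := by
    intro i
    obtain ⟨x, hx, hxU⟩ := Set.not_subset.mp (hcon i)
    exact ⟨x, hx, hxU⟩
  have hd' : Directed (· ⊇ ·) (fun i => C i ∩ Uᶜ) := by
    intro i j
    obtain ⟨k, hki, hkj⟩ := hd i j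
    exact ⟨k, Set.inter_subset_inter_left _ hki, Set.inter_subset_inter_left _ hkj⟩
  obtain ⟨x, hx⟩ := IsCompact.nonempty_iInter_of_directed_nonempty_isCompact_isClosed
    (fun i => C i ∩ Uᶜ) hd' hne
    (fun i => (hc i).inter_right hU.isClosed_compl)
    (fun i => (hcl i).inter hU.isClosed_compl)
  simp only [Set.mem_iInter, Set.mem_inter_iff, Set.mem_compl_iff] at hx
  obtain ⟨i⟩ := ‹Nonempty ι›
  exact (hx i).2 (h (Set.mem_iInter.2 fun j => (hx j).1))

end Aux

section Main
open Pointwise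

variable {G : Type*} [Group G] {ι : Type*} (M : ι → Subgroup G) [∀ i, (M i).Normal]

theorem aux_toInvLimQuot_apply (g : G) (i : ι) :
    ((toInvLimQuot M g : invLimQuot M) : ∀ i, G ⧸ M i) i = QuotientGroup.mk g := rfl

theorem aux_mem_invLimQuot_iff (x : ∀ i, G ⧸ M i) :
    x ∈ invLimQuot M ↔ ∀ (i j : ι) (h : M i ≤ M j),
      QuotientGroup.map (M i) (M j) (MonoidHom.id G) (fun _ hg => h hg) (x i) = x j :=
  Iff.rfl

theorem aux_ker : (toInvLimQuot M).ker = ⨅ i, M i := by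
  ext g
  simp only [MonoidHom.mem_ker, Subgroup.mem_iInf]
  constructor
  · intro h i
    have : ((toInvLimQuot M g : invLimQuot M) : ∀ i, G ⧸ M i) i = 1 := by rw [h]; rfl
    rw [aux_toInvLimQuot_apply] at this
    exact (QuotientGroup.eq_one_iff g).mp this
  · intro h
    ext i
    exact (QuotientGroup.eq_one_iff g).mpr (h i)

theorem aux_surjective [TopologicalSpace G] [IsTopologicalGroup G] [T2Space G] (hcomp : ∀ i, IsCompact ((M i : Subgroup G) : Set G))
    (hdir : ∀ i j : ι, ∃ k, M k ≤ M i ⊓ M j) :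
    Function.Surjective (toInvLimQuot M) := by
  rcases isEmpty_or_nonempty ι with hι | hι
  · intro x
    exact ⟨1, Subtype.ext (funext fun i => (IsEmpty.false i).elim)⟩
  · intro x
    -- choose representatives
    have hrep : ∀ i, ∃ g : G, QuotientGroup.mk g = (x : ∀ i, G ⧸ M i) i := fun i =>
      Quotient.exists_rep _
    choose g hg using hrep
    set C : ι → Set G := fun i => QuotientGroup.mk ⁻¹' {(x : ∀ i, G ⧸ M i) i} with hC
    have hCco : ∀ i, C i = (g i) • ((M i : Subgroup G) : Set G) := by
      intro i
      ext h
      simp only [hC, Set.mem_preimage, Set.mem_singleton_iff, ← hg i,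
        Set.mem_smul_set_iff_inv_smul_mem, smul_eq_mul, SetLike.mem_coe]
      rw [QuotientGroup.eq]
      constructor
      · intro hh
        have := (M i).inv_mem hh
        simpa using this
      · intro hh
        have := (M i).inv_mem hh
        simpa using this
    have hCcomp : ∀ i, IsCompact (C i) := fun i => by
      rw [hCco i]; exact (hcomp i).smul (g i)
    have hCcl : ∀ i, IsClosed (C i) := fun i => (hCcomp i).isClosed
    have hCne : ∀ i, (C i).Nonempty := fun i => ⟨g i, hg i⟩
    have key : ∀ {i k : ι}, M k ≤ M i → C k ⊆ C i := by
      intro i k hki h hh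
      simp only [hC, Set.mem_preimage, Set.mem_singleton_iff] at hh ⊢
      rw [← x.2 k i hki, ← hh]
      rfl
    have hCdir : Directed (· ⊇ ·) C := by
      intro i j
      obtain ⟨k, hk⟩ := hdir i j
      exact ⟨k, key (hk.trans inf_le_left), key (hk.trans inf_le_right)⟩
    obtain ⟨h, hh⟩ := IsCompact.nonempty_iInter_of_directed_nonempty_isCompact_isClosed
      C hCdir hCne hCcomp hCcl
    exact ⟨h, Subtype.ext (funext fun i => Set.mem_iInter.mp hh i)⟩

end Main

section Open
open Pointwise
variable {G : Type*} [Group G] {ι : Type*} (M : ι → Subgroup G) [∀ i, (M i).Normal]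

theorem aux_isOpenMap [TopologicalSpace G] [IsTopologicalGroup G] [T2Space G]
    (hcomp : ∀ i, IsCompact ((M i : Subgroup G) : Set G))
    (hdir : ∀ i j : ι, ∃ k, M k ≤ M i ⊓ M j) :
    IsOpenMap (toInvLimQuot M) := by
  rcases isEmpty_or_nonempty ι with hι | hι
  · intro U hU
    rcases U.eq_empty_or_nonempty with rfl | ⟨u, hu⟩
    · simp
    · have hsub : Subsingleton (invLimQuot M) :=
        ⟨fun a b => Subtype.ext (funext fun i => (IsEmpty.false i).elim)⟩
      convert isOpen_univ
      exact Set.eq_univ_of_forall fun y => ⟨u, hu, Subsingleton.elim _ _⟩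
  · intro U hU
    rw [isOpen_iff_forall_mem_open]
    rintro _ ⟨g, hg, rfl⟩
    set Lset : Set G := ⋂ i, ((M i : Subgroup G) : Set G) with hLset
    have hUL : IsOpen (U * Lset) := hU.mul_right
    have hsub : ⋂ i, g • ((M i : Subgroup G) : Set G) ⊆ U * Lset := by
      intro h hh
      simp only [Set.mem_iInter, Set.mem_smul_set_iff_inv_smul_mem, smul_eq_mul] at hh
      exact ⟨g, hg, g⁻¹ * h, Set.mem_iInter.2 hh, by group⟩
    have hdirC : Directed (· ⊇ ·) (fun i => g • ((M i : Subgroup G) : Set G)) := by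
      intro i j
      obtain ⟨k, hk⟩ := hdir i j
      exact ⟨k, Set.smul_set_mono (hk.trans inf_le_left),
        Set.smul_set_mono (hk.trans inf_le_right)⟩
    obtain ⟨i, hi⟩ := aux_exists_subset_of_iInter_subset
      (fun i => g • ((M i : Subgroup G) : Set G)) hdirC
      (fun i => (hcomp i).smul g) (fun i => ((hcomp i).smul g).isClosed) hUL hsub
    obtain ⟨V, hV1, hVK⟩ := compact_open_separated_mul_left ((hcomp i).smul g) hUL hi
    set U₀ : Set G := interior V * {g} with hU₀
    have hU₀open : IsOpen U₀ := isOpen_interior.mul_right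
    have hgU₀ : g ∈ U₀ := ⟨1, mem_interior_iff_mem_nhds.2 hV1, g, rfl, one_mul g⟩
    refine ⟨(fun y : invLimQuot M => (y : ∀ i, G ⧸ M i) i) ⁻¹' (QuotientGroup.mk '' U₀),
      ?_, ?_, ?_⟩
    · rintro y hy
      obtain ⟨h, rfl⟩ := aux_surjective M hcomp hdir y
      simp only [Set.mem_preimage, aux_toInvLimQuot_apply] at hy
      obtain ⟨u, hu, huh⟩ := hy
      have hm : u⁻¹ * h ∈ M i := by
        rwa [QuotientGroup.eq] at huh
      obtain ⟨v, hv, g'', hg'', hvg⟩ := hu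
      rw [Set.mem_singleton_iff] at hg''
      have hu_eq : u = v * g := by rw [← hvg, hg'']
      subst hu_eq
      have hhm : h ∈ V * (g • ((M i : Subgroup G) : Set G)) := by
        refine ⟨v, interior_subset hv, g * ((v * g)⁻¹ * h), ⟨(v * g)⁻¹ * h, hm, rfl⟩, by group⟩
      obtain ⟨u', hu', l, hl, rfl⟩ := hVK hhm
      refine ⟨u', hu', ?_⟩
      have hl1 : toInvLimQuot M l = 1 := by
        rw [← MonoidHom.mem_ker, aux_ker]
        exact Subgroup.mem_iInf.2 fun j => Set.mem_iInter.mp hl j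
      rw [map_mul, hl1, mul_one]
    · exact ((continuous_apply i).comp continuous_subtype_val).isOpen_preimage _
        (QuotientGroup.isOpenMap_coe U₀ hU₀open)
    · simp only [Set.mem_preimage, aux_toInvLimQuot_apply]
      exact ⟨g, hgU₀, rfl⟩

theorem aux_continuous [TopologicalSpace G] [IsTopologicalGroup G] :
    Continuous (toInvLimQuot M) := by
  apply Continuous.subtype_mk
  exact continuous_pi fun i => continuous_quot_mk
end Open

/-- For a directed (under reverse inclusion) family `M` of compact normal
subgroups of a Hausdorff topological group `G`, with `L = ⋂ i, M i`, the canonical map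
`ψ : G → lim_i G ⧸ M i` is a surjective open continuous homomorphism with kernel `L`, and
the induced map `G ⧸ L → lim_i G ⧸ M i` is an isomorphism of topological groups. -/
theorem stmt_6 {G : Type*} [Group G] [TopologicalSpace G] [IsTopologicalGroup G] [T2Space G]
    {ι : Type*} (M : ι → Subgroup G) [∀ i, (M i).Normal]
    (hcomp : ∀ i, IsCompact ((M i : Subgroup G) : Set G))
    (hdir : ∀ i j : ι, ∃ k, M k ≤ M i ⊓ M j)
    (hLnormal : (⨅ i, M i).Normal) :
    Function.Surjective (toInvLimQuot M) ∧ IsOpenMap (toInvLimQuot M) ∧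
      Continuous (toInvLimQuot M) ∧ (toInvLimQuot M).ker = ⨅ i, M i ∧
      ∃ e : (G ⧸ (⨅ i, M i)) ≃* invLimQuot M,
        Continuous e ∧ IsOpenMap e ∧
        ∀ g : G, e ((g : G ⧸ (⨅ i, M i))) = toInvLimQuot M g := by
  haveI := hLnormal
  have hsurj := aux_surjective M hcomp hdir
  have hker := aux_ker M
  have hopen := aux_isOpenMap M hcomp hdir
  refine ⟨hsurj, hopen, aux_continuous M, hker, ?_⟩
  set e : (G ⧸ (⨅ i, M i)) ≃* invLimQuot M :=
    (QuotientGroup.quotientMulEquivOfEq hker.symm).trans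
      (QuotientGroup.quotientKerEquivOfSurjective (toInvLimQuot M) hsurj) with he_def
  have he : ∀ g : G, e ((g : G ⧸ (⨅ i, M i))) = toInvLimQuot M g := by
    intro g
    simp [he_def, QuotientGroup.quotientMulEquivOfEq_mk,
      QuotientGroup.quotientKerEquivOfSurjective, QuotientGroup.kerLift_mk]
  have hcomp_e : ⇑e ∘ (QuotientGroup.mk : G → G ⧸ ⨅ i, M i) = ⇑(toInvLimQuot M) :=
    funext he
  refine ⟨e, ?_, ?_, he⟩
  · rw [(QuotientGroup.isQuotientMap_mk _).continuous_iff, hcomp_e]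
    exact aux_continuous M
  · intro W hW
    have himg : ⇑e '' W = ⇑(toInvLimQuot M) '' (QuotientGroup.mk ⁻¹' W) := by
      rw [← hcomp_e, Set.image_comp, Set.image_preimage_eq W
        (QuotientGroup.mk_surjective)]
    rw [himg]
    exact hopen _ (hW.preimage continuous_quot_mk)
end

section
/- Let ({G_α : α ∈ I}, {φ_{α,β} : α ⪯ β}) be an inverse system of second countable topological groups over a directed poset I. Let J₀ ⊆ I be a countable subset, and let (V_k)_{k∈ω} be dense open subsets of the inverse limit lim_{α∈I} G_α. Assume that for every directed subset H ⊆ I the projection π_{I→H}: lim_{α∈I} G_α → lim_{α∈H} G_α is surjective. Then there exists a countable directed subset J ⊆ I with J₀ ⊆ J, and a sequence (V'_k)_{k∈ω} of dense open subsets of lim_{α∈J} G_α, such that π_{I→J}^{-1}(V'_k) ⊆ V_k for every k ∈ ω. -/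
/-- The inverse limit of an inverse system of groups over a preordered index set, as the
subgroup of the product consisting of compatible threads. -/
def InvLimSubgroup {ι : Type*} [Preorder ι] (G : ι → Type*) [∀ i, Group (G i)]
    (φ : ∀ ⦃i j : ι⦄, i ≤ j → (G j →* G i)) : Subgroup (∀ i, G i) where
  carrier := {x | ∀ (i j : ι) (h : i ≤ j), φ h (x j) = x i}
  one_mem' := fun i j h => by simp
  mul_mem' := fun {a b} ha hb i j h => by
    simp only [Pi.mul_apply, map_mul, ha i j h, hb i j h]
  inv_mem' := fun {a} ha i j h => by
    simp only [Pi.inv_apply, map_inv, ha i j h]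

/-- The inverse limit of the system restricted to a subset `s` of the indices. -/
abbrev restrictedInvLim {ι : Type*} [Preorder ι] (G : ι → Type*) [∀ i, Group (G i)]
    (φ : ∀ ⦃i j : ι⦄, i ≤ j → (G j →* G i)) (s : Set ι) : Subgroup (∀ j : s, G j) :=
  InvLimSubgroup (fun j : s => G j) (fun j k h => φ (show (j : ι) ≤ (k : ι) from h))

/-- The natural projection `π_{ι → s}`, restricting a thread to the indices in `s`. -/
def invLimRestrict {ι : Type*} [Preorder ι] (G : ι → Type*) [∀ i, Group (G i)]
    (φ : ∀ ⦃i j : ι⦄, i ≤ j → (G j →* G i)) (s : Set ι) :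
    InvLimSubgroup G φ →* restrictedInvLim G φ s where
  toFun x := ⟨fun j => x.val j, fun j k h => x.2 j k h⟩
  map_one' := rfl
  map_mul' _ _ := rfl

section Aux
variable {ι : Type*} [Preorder ι] (G : ι → Type*) [∀ i, Group (G i)]
  [∀ i, TopologicalSpace (G i)]
  (φ : ∀ ⦃i j : ι⦄, i ≤ j → (G j →* G i))

lemma continuous_invLimRestrict (s : Set ι) :
    Continuous (invLimRestrict G φ s) := by
  have h : Continuous fun (x : InvLimSubgroup G φ) (j : s) => x.val (j : ι) :=
    continuous_pi fun j => (continuous_apply ((j : ι))).comp continuous_subtype_val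
  exact h.subtype_mk _

lemma isOpen_boxRes (s : Set ι) (F : Finset ι) (U : ∀ i, Set (G i))
    (hU : ∀ i, IsOpen (U i)) :
    IsOpen {y : restrictedInvLim G φ s | ∀ i, ∀ h : i ∈ s, i ∈ F → y.val ⟨i, h⟩ ∈ U i} := by
  have he : {y : restrictedInvLim G φ s | ∀ i, ∀ h : i ∈ s, i ∈ F → y.val ⟨i, h⟩ ∈ U i}
      = Subtype.val ⁻¹' (Set.pi {j : s | (j : ι) ∈ F} fun j => U j) := by
    ext y
    simp only [Set.mem_setOf_eq, Set.mem_preimage, Set.mem_pi]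
    exact ⟨fun h j hj => h j j.2 hj, fun h i hi hiF => h ⟨i, hi⟩ hiF⟩
  rw [he]
  have hfin : ({j : s | (j : ι) ∈ F}).Finite := by
    have : {j : s | (j : ι) ∈ F} = Subtype.val ⁻¹' (F : Set ι) := rfl
    rw [this]
    exact Set.Finite.preimage (Subtype.val_injective.injOn) F.finite_toSet
  have hop : IsOpen (Set.pi {j : s | (j : ι) ∈ F} fun j => U (j : ι)) :=
    isOpen_set_pi hfin (fun j _ => hU (j : ι))
  exact hop.preimage continuous_subtype_val

lemma step_box (V : Set (InvLimSubgroup G φ)) (hVopen : IsOpen V) (hVdense : Dense V)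
    (H : Set ι) (hsurjH : Function.Surjective (invLimRestrict G φ H))
    (B : Set (restrictedInvLim G φ H)) (hB : IsOpen B) (hBne : B.Nonempty) :
    ∃ (F : Finset ι) (U : ∀ i, Set (G i)), (∀ i, IsOpen (U i)) ∧
      {x : InvLimSubgroup G φ | ∀ i ∈ F, x.val i ∈ U i}.Nonempty ∧
      {x : InvLimSubgroup G φ | ∀ i ∈ F, x.val i ∈ U i} ⊆
        ⇑(invLimRestrict G φ H) ⁻¹' B ∩ V := by
  classical
  have hopen : IsOpen (⇑(invLimRestrict G φ H) ⁻¹' B) :=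
    hB.preimage (continuous_invLimRestrict G φ H)
  have hne : (⇑(invLimRestrict G φ H) ⁻¹' B).Nonempty := by
    obtain ⟨z, hz⟩ := hBne
    obtain ⟨x, hx⟩ := hsurjH z
    exact ⟨x, by rw [Set.mem_preimage, hx]; exact hz⟩
  have hSopen : IsOpen (⇑(invLimRestrict G φ H) ⁻¹' B ∩ V) := hopen.inter hVopen
  obtain ⟨p, hpS⟩ := hVdense.inter_open_nonempty _ hopen hne
  obtain ⟨W, hWopen, hWeq⟩ := isOpen_induced_iff.mp hSopen
  rw [← hWeq] at hpS
  obtain ⟨F, u, hu, hsub⟩ := isOpen_pi_iff.mp hWopen p.val hpS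
  refine ⟨F, fun i => if i ∈ F then u i else Set.univ, ?_, ⟨p, ?_⟩, ?_⟩
  · intro i
    by_cases h : i ∈ F
    · simpa [h] using (hu i h).1
    · simp [h]
  · intro i hi
    simpa [hi] using (hu i hi).2
  · intro x hx
    rw [← hWeq]
    refine hsub ?_
    intro i hi
    have hi' : i ∈ F := hi
    simpa [hi'] using hx i hi'

end Aux

lemma exists_directed_closure {ι : Type*} [Preorder ι] [IsDirected ι (· ≤ ·)] (S : Set ι) :
    ∃ T : Set ι, S ⊆ T ∧ (S.Countable → T.Countable) ∧ DirectedOn (· ≤ ·) T := by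
  obtain ⟨u, hu1, hu2⟩ : ∃ u : ι → ι → ι, (∀ a b, a ≤ u a b) ∧ (∀ a b, b ≤ u a b) := by
    choose u h1 h2 using fun a b : ι => directed_of (· ≤ ·) a b
    exact ⟨u, h1, h2⟩
  let f : ℕ → Set ι := fun n => Nat.rec S (fun _ T => T ∪ Set.image2 u T T) n
  have hfs : ∀ n, f (n+1) = f n ∪ Set.image2 u (f n) (f n) := fun n => rfl
  have hmono : Monotone f := monotone_nat_of_le_succ fun n => by
    rw [hfs]; exact Set.subset_union_left
  refine ⟨⋃ n, f n, Set.subset_iUnion f 0, ?_, ?_⟩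
  · intro hS
    refine Set.countable_iUnion ?_
    intro n
    induction n with
    | zero => exact hS
    | succ n ih => rw [hfs]; exact ih.union (Set.Countable.image2 ih ih u)
  · rintro a ⟨_, ⟨m, rfl⟩, ha⟩ b ⟨_, ⟨n, rfl⟩, hb⟩
    have ha' : a ∈ f (max m n) := hmono (le_max_left m n) ha
    have hb' : b ∈ f (max m n) := hmono (le_max_right m n) hb
    exact ⟨u a b, Set.mem_iUnion.2 ⟨max m n + 1, by
      rw [hfs]; exact Or.inr ⟨a, ha', b, hb', rfl⟩⟩, hu1 a b, hu2 a b⟩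


/-- Given an inverse system of second countable topological groups over a
directed poset, with all projections onto directed subsystems surjective, a countable
set `J₀` of indices, and countably many dense open sets `V k` in the limit, there is a
countable directed `J ⊇ J₀` and dense open sets `V' k` in the limit over `J` whose
preimages under `π_{I→J}` are contained in the `V k`. -/
theorem stmt_8 {ι : Type*} [PartialOrder ι] [IsDirected ι (· ≤ ·)]
    (G : ι → Type*) [∀ i, Group (G i)] [∀ i, TopologicalSpace (G i)]
    [∀ i, IsTopologicalGroup (G i)] [∀ i, SecondCountableTopology (G i)]
    (φ : ∀ ⦃i j : ι⦄, i ≤ j → (G j →* G i))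
    (hcont : ∀ (i j : ι) (h : i ≤ j), Continuous (φ h))
    (hsurj : ∀ (i j : ι) (h : i ≤ j), Function.Surjective (φ h))
    (hrefl : ∀ i : ι, φ (le_refl i) = MonoidHom.id (G i))
    (htrans : ∀ (i j k : ι) (hij : i ≤ j) (hjk : j ≤ k),
      φ (hij.trans hjk) = (φ hij).comp (φ hjk))
    (J₀ : Set ι) (hJ₀ : J₀.Countable)
    (V : ℕ → Set (InvLimSubgroup G φ))
    (hVopen : ∀ k, IsOpen (V k)) (hVdense : ∀ k, Dense (V k))
    (hproj : ∀ H : Set ι, DirectedOn (· ≤ ·) H →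
      Function.Surjective (invLimRestrict G φ H)) :
    ∃ J : Set ι, J.Countable ∧ J₀ ⊆ J ∧ DirectedOn (· ≤ ·) J ∧
      ∃ V' : ℕ → Set (restrictedInvLim G φ J),
        (∀ k, IsOpen (V' k)) ∧ (∀ k, Dense (V' k)) ∧
        ∀ k, (invLimRestrict G φ J) ⁻¹' (V' k) ⊆ V k := by
    classical
  obtain ⟨cl, hcl⟩ : ∃ cl : Set ι → Set ι, ∀ S, S ⊆ cl S ∧ (S.Countable → (cl S).Countable) ∧
      DirectedOn (· ≤ ·) (cl S) := by
    choose cl h1 h2 h3 using fun S : Set ι => exists_directed_closure S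
    exact ⟨cl, fun S => ⟨h1 S, h2 S, h3 S⟩⟩
  have hbasis : ∀ H : Set ι, ∃ b : Set (Set (restrictedInvLim G φ H)),
      H.Countable → b.Countable ∧ ∅ ∉ b ∧ TopologicalSpace.IsTopologicalBasis b := by
    intro H
    by_cases hH : H.Countable
    · haveI : Countable H := hH.to_subtype
      haveI hsc : SecondCountableTopology (∀ j : H, G (j : ι)) := inferInstance
      haveI hsc2 : SecondCountableTopology (restrictedInvLim G φ H) :=
        TopologicalSpace.secondCountableTopology_induced _ (∀ j : H, G (j : ι)) Subtype.val
      obtain ⟨b, h1, h2, h3⟩ := TopologicalSpace.exists_countable_basis (restrictedInvLim G φ H)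
      exact ⟨b, fun _ => ⟨h1, h2, h3⟩⟩
    · exact ⟨∅, fun h => absurd h hH⟩
  choose bas hbas using hbasis
  have hstepdata : ∀ (H : Set ι) (B : Set (restrictedInvLim G φ H)) (k : ℕ),
      ∃ (F : Finset ι) (U : ∀ i, Set (G i)),
        DirectedOn (· ≤ ·) H → IsOpen B → B.Nonempty →
          (∀ i, IsOpen (U i)) ∧
          {x : InvLimSubgroup G φ | ∀ i ∈ F, x.val i ∈ U i}.Nonempty ∧
          {x : InvLimSubgroup G φ | ∀ i ∈ F, x.val i ∈ U i} ⊆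
            ⇑(invLimRestrict G φ H) ⁻¹' B ∩ V k := by
    intro H B k
    by_cases h : DirectedOn (· ≤ ·) H ∧ IsOpen B ∧ B.Nonempty
    · obtain ⟨F, U, h1, h2, h3⟩ :=
        step_box G φ (V k) (hVopen k) (hVdense k) H (hproj H h.1) B h.2.1 h.2.2
      exact ⟨F, U, fun _ _ _ => ⟨h1, h2, h3⟩⟩
    · exact ⟨∅, fun _ => Set.univ, fun hd ho hn => absurd ⟨hd, ho, hn⟩ h⟩
  choose Fd Ud hFU using hstepdata
  set step : Set ι → Set ι :=
    fun H => cl (H ∪ ⋃ B ∈ bas H, ⋃ k : ℕ, (Fd H B k : Set ι)) with hstepdef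
  set Jn : ℕ → Set ι := fun n => step^[n] (cl J₀) with hJndef
  have hJ0 : Jn 0 = cl J₀ := rfl
  have hJsucc : ∀ n, Jn (n+1) = step (Jn n) := fun n => Function.iterate_succ_apply' step n _
  have hJncnt : ∀ n, (Jn n).Countable := by
    intro n
    induction n with
    | zero => exact (hcl J₀).2.1 hJ₀
    | succ n ih =>
      rw [hJsucc]
      refine (hcl _).2.1 (ih.union ?_)
      refine Set.Countable.biUnion ((hbas _ ih).1) fun B _ => ?_
      exact Set.countable_iUnion fun k => (Fd (Jn n) B k).countable_toSet
  have hJndir : ∀ n, DirectedOn (· ≤ ·) (Jn n) := by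
    intro n
    cases n with
    | zero => exact (hcl J₀).2.2
    | succ n => rw [hJsucc]; exact (hcl _).2.2
  have hJnmono : Monotone Jn := by
    apply monotone_nat_of_le_succ
    intro n
    rw [hJsucc]
    exact Set.Subset.trans Set.subset_union_left (hcl _).1
  set J : Set ι := ⋃ n, Jn n with hJdef
  have hJnsubJ : ∀ n, Jn n ⊆ J := fun n => Set.subset_iUnion Jn n
  have hJcnt : J.Countable := Set.countable_iUnion hJncnt
  have hJ₀sub : J₀ ⊆ J := Set.Subset.trans (hcl J₀).1 (hJ0 ▸ hJnsubJ 0)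
  have hJdir : DirectedOn (· ≤ ·) J := by
    rintro a ⟨_, ⟨m, rfl⟩, ha⟩ b ⟨_, ⟨n, rfl⟩, hb⟩
    obtain ⟨c, hc, hac, hbc⟩ := hJndir (max m n) a (hJnmono (le_max_left m n) ha) b
      (hJnmono (le_max_right m n) hb)
    exact ⟨c, hJnsubJ (max m n) hc, hac, hbc⟩
  have hFsubJ : ∀ n (B : Set (restrictedInvLim G φ (Jn n))) (k : ℕ), B ∈ bas (Jn n) →
      (Fd (Jn n) B k : Set ι) ⊆ J := by
    intro n B k hB
    refine Set.Subset.trans ?_ (hJnsubJ (n+1))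
    rw [hJsucc]
    refine Set.Subset.trans ?_ (hcl _).1
    refine Set.Subset.trans ?_ Set.subset_union_right
    exact Set.Subset.trans (Set.subset_iUnion (fun k => ((Fd (Jn n) B k : Set ι))) k)
      (Set.subset_biUnion_of_mem (u := fun B => ⋃ k : ℕ, (Fd (Jn n) B k : Set ι)) hB)
  have hBdata : ∀ n (B : Set (restrictedInvLim G φ (Jn n))) (k : ℕ), B ∈ bas (Jn n) →
      (∀ i, IsOpen (Ud (Jn n) B k i)) ∧
      {x : InvLimSubgroup G φ | ∀ i ∈ Fd (Jn n) B k, x.val i ∈ Ud (Jn n) B k i}.Nonempty ∧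
      {x : InvLimSubgroup G φ | ∀ i ∈ Fd (Jn n) B k, x.val i ∈ Ud (Jn n) B k i} ⊆
        ⇑(invLimRestrict G φ (Jn n)) ⁻¹' B ∩ V k := by
    intro n B k hB
    obtain ⟨hbcnt, hbne, hbbas⟩ := hbas (Jn n) (hJncnt n)
    refine hFU (Jn n) B k (hJndir n) (hbbas.isOpen hB) ?_
    rcases Set.eq_empty_or_nonempty B with h | h
    · exact absurd (h ▸ hB) hbne
    · exact h
  refine ⟨J, hJcnt, hJ₀sub, hJdir, fun k => ⋃ n, ⋃ B ∈ bas (Jn n),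
      {y : restrictedInvLim G φ J | ∀ i, ∀ h : i ∈ J, i ∈ Fd (Jn n) B k →
        y.val ⟨i, h⟩ ∈ Ud (Jn n) B k i}, ?_, ?_, ?_⟩
  · -- open
    intro k
    refine isOpen_iUnion fun n => isOpen_biUnion fun B hB => ?_
    exact isOpen_boxRes G φ J _ _ (hBdata n B k hB).1
  · -- dense
    intro k
    rw [dense_iff_inter_open]
    intro O hO hOne
    obtain ⟨W, hWopen, hWeq⟩ := isOpen_induced_iff.mp hO
    obtain ⟨p, hp⟩ := hOne
    rw [← hWeq] at hp
    obtain ⟨s, u, hu, hsub⟩ := isOpen_pi_iff.mp hWopen p.val hp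
    set F₀ : Finset ι := s.image Subtype.val with hF₀def
    obtain ⟨n, hn⟩ : ∃ n, (F₀ : Set ι) ⊆ Jn n := by
      have hmem : ∀ i ∈ F₀, ∃ m, i ∈ Jn m := by
        intro i hi
        obtain ⟨j, hj, rfl⟩ := Finset.mem_image.mp hi
        exact Set.mem_iUnion.mp j.2
      choose g hg using hmem
      refine ⟨F₀.attach.sup (fun x => g x.1 x.2), ?_⟩
      intro i hi
      have hi' : i ∈ F₀ := hi
      exact hJnmono (Finset.le_sup (Finset.mem_attach _ ⟨i, hi'⟩)) (hg i hi')
    obtain ⟨t, htopen, htj⟩ : ∃ t : ∀ i, Set (G i), (∀ i, IsOpen (t i)) ∧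
        ∀ (j : J), j ∈ s → t (j : ι) = u j := by
      refine ⟨fun i => if h : ∃ hi : i ∈ J, (⟨i, hi⟩ : J) ∈ s then u ⟨i, h.choose⟩ else Set.univ,
        fun i => ?_, fun j hj => ?_⟩
      · by_cases h : ∃ hi : i ∈ J, (⟨i, hi⟩ : J) ∈ s
        · simp only [dif_pos h]
          exact (hu _ h.choose_spec).1
        · simp only [dif_neg h]
          exact isOpen_univ
      · have hex : ∃ hi : (j : ι) ∈ J, (⟨(j : ι), hi⟩ : J) ∈ s := ⟨j.2, hj⟩
        simp only [dif_pos hex]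
    set q : restrictedInvLim G φ (Jn n) :=
      ⟨fun j => p.val ⟨(j : ι), hJnsubJ n j.2⟩,
        fun j j' h => p.2 ⟨(j : ι), hJnsubJ n j.2⟩ ⟨(j' : ι), hJnsubJ n j'.2⟩ h⟩ with hqdef
    have hqbox : q ∈ {z : restrictedInvLim G φ (Jn n) |
        ∀ i, ∀ h : i ∈ Jn n, i ∈ F₀ → z.val ⟨i, h⟩ ∈ t i} := by
      intro i hi hiF
      obtain ⟨j, hjs, hji⟩ := Finset.mem_image.mp hiF
      subst hji
      rw [htj j hjs]
      show p.val ⟨(j : ι), hJnsubJ n hi⟩ ∈ u j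
      exact (hu j hjs).2
    have hbox_open : IsOpen {z : restrictedInvLim G φ (Jn n) |
        ∀ i, ∀ h : i ∈ Jn n, i ∈ F₀ → z.val ⟨i, h⟩ ∈ t i} :=
      isOpen_boxRes G φ (Jn n) F₀ t htopen
    obtain ⟨hbcnt, hbne, hbbas⟩ := hbas (Jn n) (hJncnt n)
    obtain ⟨B, hB, hqB, hBsub⟩ := hbbas.exists_subset_of_mem_open hqbox hbox_open
    obtain ⟨hUo, ⟨x, hx⟩, hsubV⟩ := hBdata n B k hB
    refine ⟨invLimRestrict G φ J x, ?_, ?_⟩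
    · rw [← hWeq]
      refine hsub ?_
      intro j hjs
      have hjs' : j ∈ s := hjs
      have hxB : invLimRestrict G φ (Jn n) x ∈ B := (hsubV hx).1
      have hxbox := hBsub hxB
      have hjF₀ : (j : ι) ∈ F₀ := Finset.mem_image.mpr ⟨j, hjs', rfl⟩
      have hjJn : (j : ι) ∈ Jn n := hn hjF₀
      have hmem := hxbox (j : ι) hjJn hjF₀
      rw [htj j hjs'] at hmem
      exact hmem
    · refine Set.mem_iUnion.2 ⟨n, ?_⟩
      refine Set.mem_biUnion hB ?_
      intro i hiJ hiF
      exact hx i hiF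
  · -- preimage
    intro k x hx
    rw [Set.mem_preimage] at hx
    simp only [Set.mem_iUnion] at hx
    obtain ⟨n, B, hB, hmem⟩ := hx
    have hxbox : x ∈ {y : InvLimSubgroup G φ | ∀ i ∈ Fd (Jn n) B k, y.val i ∈ Ud (Jn n) B k i} := by
      intro i hiF
      exact hmem i (hFsubJ n B k hB hiF) hiF
    exact ((hBdata n B k hB).2.2 hxbox).2
end

section
/- Let G be a locally compact Hausdorff topological group such that for every open neighborhood U of the identity there exists a compact normal subgroup N_U ⊆ U for which G/N_U is a Lie group with finitely many connected components, and let 𝔑 be the family of all compact normal subgroups N of G such that G/N is a Lie group with finitely many connected components. Let J₀ = {N_{U_i} : i ∈ ω} ⊆ 𝔑 be a countable subset and set K := ⋂_{N ∈ J₀} N. If M ⊆ G/K is non-meager in the quotient topology, then φ_K^{-1}(M) is non-meager in G, where φ_K: G → G/K is the canonical projection. -/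
/-- A topological group is a Lie group if it carries a smooth manifold structure (modelled
on some Euclidean space) making the group operations smooth. -/
def IsLieGroup (G : Type*) [Group G] [TopologicalSpace G] : Prop :=
  ∃ (n : ℕ) (_ : ChartedSpace (EuclideanSpace ℝ (Fin n)) G),
    LieGroup (modelWithCornersSelf ℝ (EuclideanSpace ℝ (Fin n))) (⊤ : ℕ∞) G

/-- Membership in the family `𝔑`: `N` is a compact normal subgroup such that `G/N` is a
Lie group with finitely many connected components. -/
class IsLieQuotient {G : Type*} [Group G] [TopologicalSpace G] (N : Subgroup G)
    extends toNormal : N.Normal : Prop where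
  compact : IsCompact (N : Set G)
  lie : IsLieGroup (G ⧸ N)
  finiteComponents : Finite (ConnectedComponents (G ⧸ N))

/-!
Cover `φ_K⁻¹(M)` by countably many nowhere dense sets `E`. Haar measure gives `G` the countable
chain condition, so for each `E` a maximal disjoint family of open sets `B` with `B * N_B ⊆ B`
(`N_B ∈ 𝔑`) missing `closure E` is countable, and its union is dense. Intersecting the `Nᵢ` with
all these `N_B` yields a closed subgroup `H ≤ K` such that every `E * H` is still nowhere dense,
and `G ⧸ H` is second countable, as it injects into a countable product of Lie groups. So `M`
pulls back to a meagre set in `G ⧸ H`, and a Baire category argument in the compact fibres of the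
open map `G ⧸ H → G ⧸ K`, run over a countable base of `G ⧸ H`, shows that `M` is meagre.
-/

open Set Function Topology Pointwise MeasureTheory

section Meagre

variable {X Y : Type*} [TopologicalSpace X] [TopologicalSpace Y]

theorem IsNowhereDense.of_preimage {f : X → Y} (hc : Continuous f) (ho : IsOpenMap f)
    (hs : Surjective f) {s : Set Y} (h : IsNowhereDense (f ⁻¹' s)) : IsNowhereDense s := by
  have hsub : f ⁻¹' interior (closure s) ⊆ interior (closure (f ⁻¹' s)) := by
    rw [← ho.preimage_closure_eq_closure_preimage hc]
    exact interior_maximal (preimage_mono interior_subset) (isOpen_interior.preimage hc)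
  exact hs.preimage_injective (subset_empty_iff.mp (h ▸ hsub))

theorem IsOpenMap.isNowhereDense_image_diff {f : X → Y} (hc : Continuous f) (ho : IsOpenMap f)
    {F W : Set X} (hF : IsClosed F) (hF' : interior F = ∅) (hW : IsOpen W) :
    IsNowhereDense (f '' W \ f '' (W \ F)) := by
  set U := interior (closure (f '' W \ f '' (W \ F)))
  have hU : Disjoint U (f '' (W \ F)) :=
    ((disjoint_sdiff_left.closure_left (ho _ (hW.sdiff hF))).mono_left interior_subset)
  refine eq_empty_iff_forall_notMem.mpr fun y hy => ?_
  obtain ⟨_, hxU, x, hxW, rfl⟩ :=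
    mem_closure_iff.mp (closure_mono sdiff_subset (interior_subset hy)) U isOpen_interior hy
  have hUW : f ⁻¹' U ∩ W ⊆ F := fun z ⟨hzU, hzW⟩ =>
    by_contra fun hzF => hU.ne_of_mem hzU ⟨z, ⟨hzW, hzF⟩, rfl⟩ rfl
  have := interior_maximal hUW ((isOpen_interior.preimage hc).inter hW) ⟨hxU, hxW⟩
  rwa [hF'] at this

theorem IsCompact.exists_isOpen_inter_subset [T2Space X] {ι : Type*} [Countable ι] {t : Set X}
    (ht : IsCompact t) (hne : t.Nonempty) {F : ι → Set X} (hF : ∀ i, IsClosed (F i))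
    (hcov : t ⊆ ⋃ i, F i) : ∃ i, ∃ W, IsOpen W ∧ (W ∩ t).Nonempty ∧ W ∩ t ⊆ F i := by
  have : CompactSpace t := isCompact_iff_compactSpace.mp ht
  have : Nonempty t := hne.to_subtype
  obtain ⟨i, p, hp⟩ := nonempty_interior_of_iUnion_of_closed
    (fun i => (hF i).preimage continuous_subtype_val)
    (eq_univ_of_forall fun x => by simpa using hcov x.2)
  obtain ⟨W, hW, hpW, hWt⟩ :=
    mem_nhdsWithin.mp (mem_nhds_subtype_iff_nhdsWithin.mp (mem_interior_iff_mem_nhds.mp hp))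
  refine ⟨i, W, hW, ⟨p, hpW, p.2⟩, fun x hx => ?_⟩
  obtain ⟨q, hq, rfl⟩ := hWt hx
  exact hq

theorem IsMeagre.of_preimage [T2Space X] [SecondCountableTopology X] {f : X → Y}
    (hc : Continuous f) (ho : IsOpenMap f) (hs : Surjective f) {M : Set Y}
    (hfib : ∀ y ∈ M, IsCompact (f ⁻¹' {y})) (h : IsMeagre (f ⁻¹' M)) : IsMeagre M := by
  obtain ⟨S, hS, hSc, hcover⟩ := isMeagre_iff_countable_union_isNowhereDense.mp h
  obtain ⟨B, hBc, -, hB⟩ := TopologicalSpace.exists_countable_basis X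
  have : Countable S := hSc.to_subtype
  -- `f '' b \ f '' (b \ F)` consists of the points whose fibre meets `b`, but only inside `F`
  have hM : M ⊆ ⋃ s : S, ⋃ b ∈ B, f '' b \ f '' (b \ closure s) := by
    intro y hy
    obtain ⟨x₀, rfl⟩ := hs y
    have hfib_cover : f ⁻¹' {f x₀} ⊆ ⋃ s : S, closure (s : Set X) := fun x hx => by
      obtain ⟨s, hsS, hxs⟩ := hcover (show f x ∈ M from (mem_singleton_iff.mp hx).symm ▸ hy)
      exact mem_iUnion.mpr ⟨⟨s, hsS⟩, subset_closure hxs⟩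
    obtain ⟨s, W, hW, ⟨x, hxW, hx⟩, hWs⟩ := (hfib _ hy).exists_isOpen_inter_subset ⟨x₀, rfl⟩
      (fun _ => isClosed_closure) hfib_cover
    obtain ⟨b, hbB, hxb, hbW⟩ := hB.exists_subset_of_mem_open hxW hW
    refine mem_iUnion₂.mpr ⟨s, b, mem_iUnion.mpr ⟨hbB, ⟨x, hxb, hx⟩, ?_⟩⟩
    rintro ⟨z, ⟨hzb, hzs⟩, hz⟩
    exact hzs (hWs ⟨hbW hzb, hz⟩)
  refine (isMeagre_iUnion fun s => isMeagre_biUnion hBc fun b hb => ?_).mono hM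
  exact (ho.isNowhereDense_image_diff hc isClosed_closure (hS s s.2) (hB.isOpen hb)).isMeagre

end Meagre

section Countability

variable {X Y : Type*} [TopologicalSpace X] [TopologicalSpace Y]

theorem Function.Surjective.sigmaCompactSpace [SigmaCompactSpace X] {f : X → Y}
    (hf : Surjective f) (hc : Continuous f) : SigmaCompactSpace Y :=
  isSigmaCompact_univ_iff.mp (hf.range_eq ▸ isSigmaCompact_range hc)

theorem IsProperMap.sigmaCompactSpace [SigmaCompactSpace Y] {f : X → Y} (hf : IsProperMap f) :
    SigmaCompactSpace X := by
  rw [← isSigmaCompact_univ_iff, ← preimage_univ (f := f), ← iUnion_compactCovering,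
    preimage_iUnion]
  exact isSigmaCompact_iUnion_of_isCompact _
    fun n => hf.isCompact_preimage (isCompact_compactCovering Y n)

theorem Continuous.secondCountableTopology_of_injective [LocallyCompactSpace X]
    [SigmaCompactSpace X] [T2Space Y] [SecondCountableTopology Y] {f : X → Y} (hf : Continuous f)
    (hinj : Injective f) : SecondCountableTopology X := by
  let K := CompactExhaustion.choice X
  have (n : ℕ) : SecondCountableTopology (interior (K n)) := by
    have : CompactSpace (K n) := isCompact_iff_compactSpace.mp (K.isCompact n)
    have : SecondCountableTopology (K n) :=
      ((hf.comp continuous_subtype_val).isClosedEmbedding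
        (hinj.comp Subtype.val_injective)).isEmbedding.secondCountableTopology
    exact (IsEmbedding.inclusion interior_subset).secondCountableTopology
  refine TopologicalSpace.secondCountableTopology_of_countable_cover
    (U := fun n => interior (K n)) (fun n => isOpen_interior) (eq_univ_of_forall fun x => ?_)
  exact mem_iUnion.mpr ⟨K.find x + 1, K.subset_interior_succ _ (K.mem_find x)⟩

end Countability

section Disjoint

variable {X : Type*} [TopologicalSpace X]

theorem exists_pairwiseDisjoint_dense_sUnion {𝒮 : Set (Set X)}
    (h𝒮 : ∀ V, IsOpen V → V.Nonempty → ∃ B ∈ 𝒮, B.Nonempty ∧ B ⊆ V) :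
    ∃ T ⊆ 𝒮, T.PairwiseDisjoint id ∧ (∀ B ∈ T, B.Nonempty) ∧ Dense (⋃₀ T) := by
  obtain ⟨T, hT⟩ : ∃ T, Maximal
      (· ∈ {T : Set (Set X) | T ⊆ {B ∈ 𝒮 | B.Nonempty} ∧ T.PairwiseDisjoint id}) T :=
    zorn_subset _ fun c hc hchain => ⟨⋃₀ c, ⟨sUnion_subset fun T hT => (hc hT).1,
      (hchain.pairwiseDisjoint_sUnion id).2 fun T hT => (hc hT).2⟩, fun _ => subset_sUnion_of_mem⟩
  refine ⟨T, fun B hB => (hT.prop.1 hB).1, hT.prop.2, fun B hB => (hT.prop.1 hB).2, ?_⟩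
  refine dense_iff_inter_open.mpr fun V hV hVne => not_not.mp fun hdisj => ?_
  obtain ⟨B, hB𝒮, ⟨b, hb⟩, hBV⟩ := h𝒮 V hV hVne
  have hBT : B ∈ T := hT.mem_of_prop_insert ⟨insert_subset ⟨hB𝒮, b, hb⟩ hT.prop.1,
    hT.prop.2.insert fun C hC _ => disjoint_left.mpr fun x hxB hxC =>
      hdisj ⟨x, hBV hxB, C, hC, hxC⟩⟩
  exact hdisj ⟨b, hBV hb, B, hBT, hb⟩

end Disjoint

theorem IsCompact.pow {M : Type*} [Monoid M] [TopologicalSpace M] [ContinuousMul M]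
    {V : Set M} (hV : IsCompact V) (n : ℕ) : IsCompact (V ^ n) := by
  induction n with
  | zero => simp
  | succ n ih => rw [pow_succ]; exact ih.mul hV

theorem Subgroup.closure_subset_iUnion_pow {G : Type*} [Group G] (V : Set G) :
    (closure V : Set G) ⊆ ⋃ n : ℕ, (V ∪ V⁻¹) ^ n := by
  have hsymm : (V ∪ V⁻¹)⁻¹ = V ∪ V⁻¹ := by rw [union_inv, inv_inv, union_comm]
  intro x hx
  induction hx using Subgroup.closure_induction with
  | mem x hx => exact mem_iUnion.mpr ⟨1, by simpa using Or.inl hx⟩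
  | one => exact mem_iUnion.mpr ⟨0, by simp⟩
  | mul x y _ _ hx hy =>
    obtain ⟨m, hm⟩ := mem_iUnion.mp hx
    obtain ⟨n, hn⟩ := mem_iUnion.mp hy
    exact mem_iUnion.mpr ⟨m + n, pow_add (V ∪ V⁻¹) m n ▸ mul_mem_mul hm hn⟩
  | inv x _ hx =>
    obtain ⟨n, hn⟩ := mem_iUnion.mp hx
    refine mem_iUnion.mpr ⟨n, ?_⟩
    rw [← hsymm, inv_pow]
    exact inv_mem_inv.mpr hn

namespace Subgroup

variable {G : Type*} [Group G]

theorem surjective_quotientMapOfLE {H K : Subgroup G} (h : H ≤ K) :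
    Surjective (quotientMapOfLE h) := fun y => by
  obtain ⟨g, rfl⟩ := QuotientGroup.mk_surjective y
  exact ⟨g, rfl⟩

theorem continuous_quotientMapOfLE [TopologicalSpace G] {H K : Subgroup G} (h : H ≤ K) :
    Continuous (quotientMapOfLE h) :=
  (QuotientGroup.isQuotientMap_mk H).continuous_iff.mpr QuotientGroup.continuous_mk

theorem isClosed_iInf [TopologicalSpace G] {ι : Type*} {N : ι → Subgroup G}
    (hN : ∀ i, IsClosed (N i : Set G)) : IsClosed ((⨅ i, N i : Subgroup G) : Set G) := by
  rw [coe_iInf]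
  exact isClosed_iInter hN

end Subgroup

instance QuotientGroup.instSigmaCompactSpace {G : Type*} [Group G] [TopologicalSpace G]
    [SigmaCompactSpace G] (N : Subgroup G) :
    SigmaCompactSpace (G ⧸ N) :=
  QuotientGroup.mk_surjective.sigmaCompactSpace QuotientGroup.continuous_mk

section TopologicalGroup

variable {G : Type*} [Group G] [TopologicalSpace G] [IsTopologicalGroup G]

theorem sigmaCompactSpace_of_finite_connectedComponents [LocallyCompactSpace G]
    [Finite (ConnectedComponents G)] : SigmaCompactSpace G := by
  obtain ⟨V, hV, hV1⟩ := exists_compact_mem_nhds (1 : G)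
  set S := Subgroup.closure V
  have hSo : IsOpen (S : Set G) :=
    S.isOpen_of_mem_nhds (Filter.mem_of_superset hV1 Subgroup.subset_closure)
  have hS : IsSigmaCompact (S : Set G) :=
    (isSigmaCompact_iUnion_of_isCompact _ fun n => (hV.union hV.inv).pow n).of_isClosed_subset
      (S.isClosed_of_isOpen hSo) (Subgroup.closure_subset_iUnion_pow V)
  have hS1 : connectedComponent (1 : G) ⊆ S :=
    IsClopen.connectedComponent_subset ⟨S.isClosed_of_isOpen hSo, hSo⟩ S.one_mem
  -- each connected component lies in a single coset of the open subgroup `S`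
  obtain ⟨σ, hσ⟩ := (ConnectedComponents.surjective_coe (α := G)).hasRightInverse
  have hcover : (univ : Set G) ⊆ ⋃ c, σ c • (S : Set G) := fun x _ => by
    have hx : x ∈ connectedComponent (σ (ConnectedComponents.mk x)) := by
      rw [ConnectedComponents.coe_eq_coe.mp (hσ _)]
      exact mem_connectedComponent
    rw [← mul_one (σ _), ← smul_connectedComponent] at hx
    exact mem_iUnion.mpr ⟨_, smul_set_mono hS1 hx⟩
  rw [← isSigmaCompact_univ_iff, ← univ_subset_iff.mp hcover]
  exact isSigmaCompact_iUnion _ fun c => by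
    simpa only [image_smul] using hS.image (continuous_const_smul (σ c))

theorem QuotientGroup.isProperMap_coe {N : Subgroup G} (hN : IsCompact (N : Set G)) :
    IsProperMap ((↑) : G → G ⧸ N) := by
  refine isProperMap_iff_isClosedMap_and_compact_fibers.mpr
    ⟨continuous_mk, isClosedMap_coe hN, fun y => ?_⟩
  obtain ⟨g, rfl⟩ := mk_surjective y
  rw [← image_singleton, preimage_image_mk_eq_mul]
  exact isCompact_singleton.mul hN

namespace Subgroup

theorem isOpenMap_quotientMapOfLE {H K : Subgroup G} (h : H ≤ K) :
    IsOpenMap (quotientMapOfLE h) := fun O hO => by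
  rw [← image_preimage_eq O QuotientGroup.mk_surjective, ← image_comp]
  exact QuotientGroup.isOpenMap_coe _ (hO.preimage QuotientGroup.continuous_mk)

theorem isCompact_preimage_quotientMapOfLE {H K : Subgroup G} (h : H ≤ K)
    (hK : IsCompact (K : Set G)) {C : Set (G ⧸ K)} (hC : IsCompact C) :
    IsCompact (quotientMapOfLE h ⁻¹' C) := by
  rw [← image_preimage_eq (quotientMapOfLE h ⁻¹' C) QuotientGroup.mk_surjective]
  exact ((QuotientGroup.isProperMap_coe hK).isCompact_preimage hC).image QuotientGroup.continuous_mk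

end Subgroup

theorem Set.PairwiseDisjoint.countable_of_isOpen_of_sigmaCompact [LocallyCompactSpace G]
    [SigmaCompactSpace G] {T : Set (Set G)} (hd : T.PairwiseDisjoint id)
    (ho : ∀ B ∈ T, IsOpen B) (hne : ∀ B ∈ T, B.Nonempty) : T.Countable := by
  borelize G
  have h := Measure.countable_meas_pos_of_disjoint_iUnion (μ := Measure.haar)
    (As := fun B : T => (B : Set G)) (fun B => (ho B B.2).measurableSet)
    (fun B C hBC => hd B.2 C.2 (Subtype.coe_injective.ne hBC))
  have : (univ : Set T).Countable := h.mono fun B _ => (ho B B.2).measure_pos _ (hne B B.2)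
  exact countable_coe_iff.mp (countable_univ_iff.mp this)

end TopologicalGroup

section LieQuotient

variable {G : Type*} [Group G] [TopologicalSpace G]

theorem IsLieQuotient.sigmaCompactSpace [IsTopologicalGroup G] [LocallyCompactSpace G]
    (N : Subgroup G) [hN : IsLieQuotient N] : SigmaCompactSpace G := by
  have := hN.finiteComponents
  have : SigmaCompactSpace (G ⧸ N) := sigmaCompactSpace_of_finite_connectedComponents
  exact (QuotientGroup.isProperMap_coe hN.compact).sigmaCompactSpace

theorem IsLieQuotient.secondCountableTopology [SigmaCompactSpace G] (N : Subgroup G)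
    [hN : IsLieQuotient N] : SecondCountableTopology (G ⧸ N) := by
  obtain ⟨n, _, _⟩ := hN.lie
  exact ChartedSpace.secondCountable_of_sigmaCompact (EuclideanSpace ℝ (Fin n)) (G ⧸ N)

theorem IsLieQuotient.isClosed [T2Space G] (N : Subgroup G) [hN : IsLieQuotient N] :
    IsClosed (N : Set G) :=
  hN.compact.isClosed

theorem secondCountableTopology_quotient_iInf [IsTopologicalGroup G] [LocallyCompactSpace G]
    [SigmaCompactSpace G] [T2Space G] {ι : Type*} [Countable ι] (N : ι → Subgroup G)
    [∀ i, IsLieQuotient (N i)] : SecondCountableTopology (G ⧸ ⨅ i, N i) := by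
  have (i : ι) := IsLieQuotient.isClosed (N i)
  have := Subgroup.isClosed_iInf this
  have (i : ι) := IsLieQuotient.secondCountableTopology (N i)
  exact (continuous_pi fun i => Subgroup.continuous_quotientMapOfLE (iInf_le N i)
    ).secondCountableTopology_of_injective (Subgroup.quotientiInfEmbedding N).injective

end LieQuotient

section ApproximateByLieQuotients

variable {G : Type*} [Group G] [TopologicalSpace G] [IsTopologicalGroup G]
  (hU : ∀ U : Set G, IsOpen U → (1 : G) ∈ U →
    ∃ N : Subgroup G, IsLieQuotient N ∧ (N : Set G) ⊆ U)
include hU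

theorem exists_isLieQuotient_isOpen_mul_subset {O : Set G} (hO : IsOpen O) {g : G} (hg : g ∈ O) :
    ∃ N : Subgroup G, IsLieQuotient N ∧
      ∃ B : Set G, IsOpen B ∧ g ∈ B ∧ B * (N : Set G) ⊆ B ∧ B ⊆ O := by
  obtain ⟨W, hW, hW1, hWW⟩ := exists_open_nhds_one_mul_subset
    ((hO.smul g⁻¹).mem_nhds ⟨g, hg, inv_mul_cancel g⟩)
  obtain ⟨N, hN, hNW⟩ := hU W hW hW1
  refine ⟨N, hN, g • W * N, (hW.smul g).mul_right, ⟨g, ⟨1, hW1, mul_one g⟩, 1, N.one_mem,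
    mul_one g⟩, ?_, ?_⟩
  · rw [mul_assoc]
    exact mul_subset_mul_left (mul_subset_iff.mpr fun a ha b hb => N.mul_mem ha hb)
  · calc g • W * (N : Set G) ⊆ g • (W * W) := by rw [smul_mul_assoc]; gcongr
      _ ⊆ g • g⁻¹ • O := smul_set_mono hWW
      _ = O := smul_inv_smul g O

variable [LocallyCompactSpace G] [SigmaCompactSpace G]

theorem exists_countable_isLieQuotient_isNowhereDense_mul {E : Set G} (hE : IsNowhereDense E) :
    ∃ 𝒩 : Set (Subgroup G), 𝒩.Countable ∧ (∀ N ∈ 𝒩, IsLieQuotient N) ∧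
      IsNowhereDense (E * ((sInf 𝒩 : Subgroup G) : Set G)) := by
  obtain ⟨T, hT𝒮, hTd, hTne, hTdense⟩ := exists_pairwiseDisjoint_dense_sUnion
    (𝒮 := {B : Set G | IsOpen B ∧ Disjoint B (closure E) ∧
      ∃ N : Subgroup G, IsLieQuotient N ∧ B * (N : Set G) ⊆ B}) fun V hV hVne => by
    obtain ⟨g, hgV, hgE⟩ := (interior_eq_empty_iff_dense_compl.mp hE).inter_open_nonempty V hV hVne
    obtain ⟨N, hN, B, hB, hgB, hBN, hBV⟩ :=
      exists_isLieQuotient_isOpen_mul_subset hU (hV.inter isClosed_closure.isOpen_compl) ⟨hgV, hgE⟩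
    exact ⟨B, ⟨hB, subset_compl_iff_disjoint_right.mp (hBV.trans inter_subset_right), N, hN, hBN⟩,
      ⟨g, hgB⟩, hBV.trans inter_subset_left⟩
  have hex : ∀ B ∈ T, ∃ N : Subgroup G, IsLieQuotient N ∧ B * (N : Set G) ⊆ B :=
    fun B hB => (hT𝒮 hB).2.2
  choose! N hN hBN using hex
  refine ⟨N '' T, (hTd.countable_of_isOpen_of_sigmaCompact (fun B hB => (hT𝒮 hB).1) hTne).image N,
    forall_mem_image.2 hN, ?_⟩
  have hcompl : IsClosed (⋃₀ T)ᶜ ∧ IsNowhereDense (⋃₀ T)ᶜ := isClosed_isNowhereDense_iff_compl.mpr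
    ⟨by simpa using isOpen_sUnion fun B hB => (hT𝒮 hB).1, by simpa using hTdense⟩
  -- if `e * h ∈ B ∈ T` then `e ∈ B * N B ⊆ B`, but `B` misses `closure E`
  refine hcompl.2.mono ?_
  rintro _ ⟨e, he, h, hh, rfl⟩ ⟨B, hBT, heh⟩
  have heB : e ∈ B := hBN B hBT ⟨e * h, heh, h⁻¹, inv_mem (sInf_le (mem_image_of_mem N hBT) hh),
    mul_inv_cancel_right e h⟩
  exact (hT𝒮 hBT).2.1.ne_of_mem heB (subset_closure he) rfl

theorem exists_countable_isLieQuotient_isMeagre_image_mk {s : Set G} (hs : IsMeagre s) :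
    ∃ 𝒩 : Set (Subgroup G), 𝒩.Countable ∧ (∀ N ∈ 𝒩, IsLieQuotient N) ∧
      ∀ H : Subgroup G, H ≤ sInf 𝒩 → IsMeagre ((↑) '' s : Set (G ⧸ H)) := by
  obtain ⟨S, hS, hSc, hsS⟩ := isMeagre_iff_countable_union_isNowhereDense.mp hs
  have hex : ∀ E ∈ S, ∃ 𝒩 : Set (Subgroup G), 𝒩.Countable ∧ (∀ N ∈ 𝒩, IsLieQuotient N) ∧
      IsNowhereDense (E * ((sInf 𝒩 : Subgroup G) : Set G)) :=
    fun E hE => exists_countable_isLieQuotient_isNowhereDense_mul hU (hS E hE)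
  choose! 𝒩 h𝒩c h𝒩 h𝒩E using hex
  refine ⟨⋃ E ∈ S, 𝒩 E, hSc.biUnion h𝒩c, fun N hN => ?_, fun H hH => ?_⟩
  · obtain ⟨E, hE, hNE⟩ := mem_iUnion₂.mp hN
    exact h𝒩 E hE N hNE
  refine (isMeagre_biUnion hSc (f := fun E => ((↑) '' E : Set (G ⧸ H))) fun E hE => ?_).mono ?_
  · refine (IsNowhereDense.of_preimage QuotientGroup.continuous_mk QuotientGroup.isOpenMap_coe
      QuotientGroup.mk_surjective ?_).isMeagre
    rw [QuotientGroup.preimage_image_mk_eq_mul]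
    exact (h𝒩E E hE).mono (mul_subset_mul_left (SetLike.coe_subset_coe.mpr
      (hH.trans (sInf_le_sInf (subset_biUnion_of_mem hE)))))
  · rw [← image_iUnion₂, ← sUnion_eq_biUnion]
    exact image_mono hsS

end ApproximateByLieQuotients

/-- Given a locally compact Hausdorff group `G` in which every identity
neighborhood contains a member of `𝔑`, a countable subfamily `{N_i : i ∈ ω} ⊆ 𝔑` with
intersection `K`, and a non-meager set `M ⊆ G/K`, the preimage `φ_K⁻¹(M)` is non-meager
in `G`. -/
theorem stmt_10 {G : Type*} [Group G] [TopologicalSpace G] [IsTopologicalGroup G]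
    [LocallyCompactSpace G] [T2Space G]
    (hU : ∀ U : Set G, IsOpen U → (1 : G) ∈ U →
      ∃ N : Subgroup G, IsLieQuotient N ∧ (N : Set G) ⊆ U)
    (Nseq : ℕ → Subgroup G) (hNseq : ∀ i, IsLieQuotient (Nseq i))
    (M : Set (G ⧸ ⨅ i, Nseq i)) (hM : ¬ IsMeagre M) :
    ¬ IsMeagre ((QuotientGroup.mk : G → G ⧸ ⨅ i, Nseq i) ⁻¹' M) := by
  intro hMK
  have : SigmaCompactSpace G := IsLieQuotient.sigmaCompactSpace (Nseq 0)
  obtain ⟨𝒩, h𝒩c, h𝒩, hmeagre⟩ := exists_countable_isLieQuotient_isMeagre_image_mk hU hMK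
  set 𝔐 : Set (Subgroup G) := range Nseq ∪ 𝒩
  have : Countable 𝔐 := ((countable_range Nseq).union h𝒩c).to_subtype
  have (N : 𝔐) : IsLieQuotient N.1 := N.2.elim (fun ⟨i, hi⟩ => hi ▸ hNseq i) (h𝒩 _)
  set H := ⨅ N : 𝔐, N.1
  have hHK : H ≤ ⨅ i, Nseq i := le_iInf fun i => iInf_le_of_le ⟨Nseq i, .inl ⟨i, rfl⟩⟩ le_rfl
  have hH𝒩 : H ≤ sInf 𝒩 := le_sInf fun N hN => iInf_le_of_le ⟨N, .inr hN⟩ le_rfl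
  have := secondCountableTopology_quotient_iInf fun N : 𝔐 => N.1
  have := Subgroup.isClosed_iInf fun N : 𝔐 => IsLieQuotient.isClosed N.1
  have hK : IsCompact ((⨅ i, Nseq i : Subgroup G) : Set G) := (hNseq 0).compact.of_isClosed_subset
    (Subgroup.isClosed_iInf fun i => IsLieQuotient.isClosed (Nseq i)) (iInf_le Nseq 0)
  refine hM (IsMeagre.of_preimage (Subgroup.continuous_quotientMapOfLE hHK)
    (Subgroup.isOpenMap_quotientMapOfLE hHK) (Subgroup.surjective_quotientMapOfLE hHK)
    (fun y _ => Subgroup.isCompact_preimage_quotientMapOfLE hHK hK isCompact_singleton) ?_)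
  rw [← image_preimage_eq (_ ⁻¹' M) QuotientGroup.mk_surjective]
  exact hmeagre H hH𝒩
end

section
/- Let G be a locally compact Hausdorff topological group with left Haar measure μ, let K be a compact normal subgroup of G, and let ν be a left Haar measure on G/K. If X ⊆ G/K is null with respect to ν, then φ_K^{-1}(X) is null with respect to μ, where φ_K: G → G/K is the canonical projection. -/
/-!
Since `K` is compact, the projection `G → G ⧸ K` is proper, so it pushes the inner regular Haar
measure `μ` forward to an inner regular Haar measure on `G ⧸ K`. By uniqueness of Haar measure
this push-forward is a multiple of `ν`, hence every `ν`-null set has a `μ`-null preimage.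
-/

open MeasureTheory Filter

theorem QuotientGroup.isProperMap_coe_s12 {G : Type*} [Group G] [TopologicalSpace G]
    [IsTopologicalGroup G] {H : Subgroup G} (hH : IsCompact (H : Set G)) :
    IsProperMap ((↑) : G → G ⧸ H) := by
  refine isProperMap_iff_isClosedMap_and_compact_fibers.2
    ⟨continuous_mk, isClosedMap_coe hH, fun y ↦ ?_⟩
  obtain ⟨g, rfl⟩ := mk_surjective y
  rw [← Set.image_singleton, preimage_image_mk_eq_mul]
  exact isCompact_singleton.mul hH

theorem IsProperMap.tendsto_cocompact {X Y : Type*} [TopologicalSpace X] [TopologicalSpace Y]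
    {f : X → Y} (hf : IsProperMap f) : Tendsto f (cocompact X) (cocompact Y) :=
  hasBasis_cocompact.tendsto_right_iff.2 fun _ hK ↦ (hf.isCompact_preimage hK).compl_mem_cocompact

namespace MeasureTheory.Measure

variable {G H : Type*} [Group G] [TopologicalSpace G] [IsTopologicalGroup G]
  [MeasurableSpace G] [BorelSpace G] [Group H] [TopologicalSpace H] [IsTopologicalGroup H]
  [LocallyCompactSpace H] [MeasurableSpace H] [BorelSpace H]

theorem quasiMeasurePreserving_of_isProperMap (μ : Measure G) [μ.IsHaarMeasure] [μ.InnerRegular]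
    (ν : Measure H) [ν.IsHaarMeasure] [ν.InnerRegular] (f : G →* H) (hf : IsProperMap f)
    (hf_surj : Function.Surjective f) : QuasiMeasurePreserving f μ ν := by
  have : (μ.map f).IsHaarMeasure :=
    isHaarMeasure_map μ f hf.continuous hf_surj hf.tendsto_cocompact
  have : (μ.map f).InnerRegular := InnerRegular.map_of_continuous hf.continuous
  refine ⟨hf.continuous.measurable, ?_⟩
  rw [isMulLeftInvariant_eq_smul_of_innerRegular (μ.map f) ν]
  exact smul_absolutelyContinuous

end MeasureTheory.Measure

theorem stmt_12_general {G : Type*} [Group G] [TopologicalSpace G] [IsTopologicalGroup G]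
    [LocallyCompactSpace G] [MeasurableSpace G] [BorelSpace G]
    (μ : Measure G) [μ.IsHaarMeasure] [μ.InnerRegular]
    (K : Subgroup G) [K.Normal] (hK : IsCompact (K : Set G))
    [MeasurableSpace (G ⧸ K)] [BorelSpace (G ⧸ K)]
    (ν : Measure (G ⧸ K)) [ν.IsHaarMeasure] [ν.InnerRegular]
    (X : Set (G ⧸ K)) (hX : ν X = 0) :
    μ ((QuotientGroup.mk : G → G ⧸ K) ⁻¹' X) = 0 :=
  (Measure.quasiMeasurePreserving_of_isProperMap μ ν (QuotientGroup.mk' K)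
    (QuotientGroup.isProperMap_coe_s12 hK) (QuotientGroup.mk'_surjective K)).preimage_null hX

/-- If `μ` is a left Haar measure on a locally compact Hausdorff group
`G`, `K` a compact normal subgroup, `ν` a left Haar measure on `G/K`, and `X ⊆ G/K` is
`ν`-null, then `φ_K⁻¹(X)` is `μ`-null. -/
theorem stmt_12 {G : Type*} [Group G] [TopologicalSpace G] [IsTopologicalGroup G]
    [LocallyCompactSpace G] [T2Space G] [MeasurableSpace G] [BorelSpace G]
    (μ : Measure G) [μ.IsHaarMeasure] [μ.InnerRegular]
    (K : Subgroup G) [K.Normal] (hK : IsCompact (K : Set G))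
    [MeasurableSpace (G ⧸ K)] [BorelSpace (G ⧸ K)]
    (ν : Measure (G ⧸ K)) [ν.IsHaarMeasure] [ν.InnerRegular]
    (X : Set (G ⧸ K)) (hX : ν X = 0) :
    μ ((QuotientGroup.mk : G → G ⧸ K) ⁻¹' X) = 0 :=
  stmt_12_general μ K hK ν X hX
end

section
/- Let (X, d) be a compact metric space, let (M_i)_{i∈ω} be a sequence of finite sets, and let R ⊆ X be a co-meager set. Suppose compact sets C_{p₀p₁…p_i} ⊆ X are given for every i ∈ ω and every finite sequence p₀p₁…p_i ∈ ∏_{j≤i} M_j, satisfying: (1) for every infinite sequence p ∈ ∏_{j∈ω} M_j, the intersection ⋂_{i∈ω} C_{p₀p₁…p_i} is a singleton; (2) C_{p₀…p_n p_{n+1}} ⊆ C_{p₀…p_n} for all n and all sequences; (3) every C_{p₀…p_i} has nonempty interior; (4) for every finite sequence, C_{p₀…p_i} = ⋃_{j ∈ M_{i+1}} closure(interior(C_{p₀…p_i j})). Then there exist a strictly increasing sequence of integers 0 = n₀ < n₁ < n₂ < … and an infinite sequence r = (r_j)_{j∈ω} ∈ ∏_{j∈ω} M_j such that for every sequence s =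 (s_j)_{j∈ω} ∈ ∏_{j∈ω} M_j, if the set {i ∈ ω : s restricted to [n_i, n_{i+1}) equals r restricted to [n_i, n_{i+1})} is infinite, then ⋂_{j∈ω} C_{s₀s₁…s_j} ⊆ R. -/
/-!
The co-meager set contains `⋂ k, U k` for a decreasing sequence of dense open sets `U k`.
Since `C i p` is covered by its children, every point of `C n p` is the point of some branch
through `p` up to `n`; picking such a point in the dense open `U` and using compactness, a
branch can be steered into `U` at a finite level. Doing this in turn for the finitely many
prefixes of length `n` produces a single word on `[n, m]` forcing `C m ⊆ U` whatever the prefix.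
Concatenating such words for `U 0, U 1, …` gives the blocks and `r`, and a branch agreeing with
`r` on infinitely many blocks has its point in every `U k`.
-/

open Set Function

theorem exists_antitone_isOpen_dense_of_mem_residual {X : Type*} [TopologicalSpace X]
    {s : Set X} (hs : s ∈ residual X) :
    ∃ U : ℕ → Set X, Antitone U ∧ (∀ k, IsOpen (U k)) ∧ (∀ k, Dense (U k)) ∧
      ⋂ k, U k ⊆ s := by
  obtain ⟨S, hSo, hSd, hSc, hSs⟩ := mem_residual_iff.1 hs
  obtain ⟨e, he⟩ := (hSc.insert univ).exists_eq_range (insert_nonempty _ _)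
  have he_open_dense : ∀ k, IsOpen (e k) ∧ Dense (e k) := by
    intro k
    rcases (he ▸ mem_range_self k : e k ∈ insert univ S) with h | h
    · simp [h]
    · exact ⟨hSo _ h, hSd _ h⟩
  have hdis : ∀ k, IsOpen (dissipate e k) ∧ Dense (dissipate e k) := by
    intro k
    induction k with
    | zero => simpa [dissipate_zero_nat] using he_open_dense 0
    | succ k ih =>
      rw [dissipate_succ]
      exact ⟨ih.1.inter (he_open_dense _).1, ih.2.inter_of_isOpen_left (he_open_dense _).2 ih.1⟩
  refine ⟨dissipate e, antitone_dissipate, fun k => (hdis k).1, fun k => (hdis k).2, ?_⟩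
  rw [iInter_dissipate]
  refine fun x hx => hSs fun t ht => ?_
  obtain ⟨k, rfl⟩ : t ∈ range e := he ▸ mem_insert_of_mem _ ht
  exact mem_iInter.1 hx k

theorem exists_agree_of_agree_succ {β : ℕ → Type*} (f : ℕ → ∀ j, β j) {N : ℕ → ℕ}
    (hN : Monotone N) (hN_succ : ∀ j, j < N (j + 1))
    (hf : ∀ k, ∀ j < N k, f (k + 1) j = f k j) :
    ∃ g : ∀ j, β j, ∀ k, ∀ j < N k, g j = f k j := by
  have stable : ∀ k k', k ≤ k' → ∀ j < N k, f k' j = f k j := by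
    intro k k' hk
    induction k', hk using Nat.le_induction with
    | base => exact fun _ _ => rfl
    | succ k' hk ih => exact fun j hj => (hf k' j (hj.trans_le (hN hk))).trans (ih j hj)
  refine ⟨fun j => f (j + 1) j, fun k j hj => ?_⟩
  rcases le_total (j + 1) k with h | h
  · exact (stable _ _ h j (hN_succ j)).symm
  · exact stable _ _ h j hj

section Scheme

variable {X : Type*} {M : ℕ → Type*} {C : ℕ → (∀ j, M j) → Set X}

theorem exists_branch_mem (hdep : ∀ i p q, (∀ j ≤ i, p j = q j) → C i p = C i q)
    (hanti : ∀ p, Antitone (C · p))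
    (hcover : ∀ i p, C i p ⊆ ⋃ m : M (i + 1), C (i + 1) (update p (i + 1) m))
    {n : ℕ} {p : ∀ j, M j} {x : X} (hx : x ∈ C n p) :
    ∃ q : ∀ j, M j, (∀ j ≤ n, q j = p j) ∧ x ∈ ⋂ i, C i q := by
  have step : ∀ k (q : {q // x ∈ C (n + k) q}),
      ∃ q' : {q' // x ∈ C (n + k + 1) q'}, ∀ j < n + k + 1, q'.1 j = q.1 j := by
    rintro k ⟨q, hq⟩
    obtain ⟨m, hm⟩ := mem_iUnion.1 (hcover _ q hq)
    exact ⟨⟨_, hm⟩, fun j hj => update_of_ne (by omega) _ _⟩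
  choose next hnext using step
  let f : ∀ k, {q // x ∈ C (n + k) q} := fun k => Nat.rec ⟨p, hx⟩ next k
  obtain ⟨q, hq⟩ := exists_agree_of_agree_succ (fun k => (f k).1) (N := fun k => n + k + 1)
    (fun _ _ h => by dsimp only; omega) (fun _ => by omega) (fun k => hnext k (f k))
  refine ⟨q, fun j hj => hq 0 j (by omega),
    mem_iInter.2 fun i => hanti q (by omega : i ≤ n + i) ?_⟩
  show x ∈ C (n + i) q
  rw [hdep _ _ _ fun j hj => hq i j (by omega)]
  exact (f i).2

theorem exists_subset_of_isOpen_of_dense [TopologicalSpace X] [T2Space X]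
    (hdep : ∀ i p q, (∀ j ≤ i, p j = q j) → C i p = C i q)
    (hanti : ∀ p, Antitone (C · p))
    (hcover : ∀ i p, C i p ⊆ ⋃ m : M (i + 1), C (i + 1) (update p (i + 1) m))
    (hcompact : ∀ i p, IsCompact (C i p))
    (hsingleton : ∀ p, ∃ x, ⋂ i, C i p = {x})
    (hint : ∀ i p, (interior (C i p)).Nonempty)
    {U : Set X} (hUo : IsOpen U) (hUd : Dense U) (n : ℕ) (p : ∀ j, M j) :
    ∃ m ≥ n, ∃ q : ∀ j, M j, (∀ j ≤ n, q j = p j) ∧ C m q ⊆ U := by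
  obtain ⟨x, hxC, hxU⟩ := hUd.inter_open_nonempty _ isOpen_interior (hint n p)
  obtain ⟨q, hqp, hxq⟩ := exists_branch_mem hdep hanti hcover (interior_subset hxC)
  obtain ⟨y, hy⟩ := hsingleton q
  obtain ⟨i, hi⟩ := exists_subset_nhds_of_isCompact (hanti q).directed_ge (hcompact · q)
    (U := U) fun z hz => by
      rw [hy] at hxq hz
      exact hUo.mem_nhds ((hz.trans hxq.symm) ▸ hxU)
  exact ⟨max n i, le_max_left _ _, q, hqp, (hanti q (le_max_right _ _)).trans hi⟩

theorem exists_block [∀ i, Finite (M i)] [∀ i, Nonempty (M i)] {U : Set X}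
    (hdep : ∀ i p q, (∀ j ≤ i, p j = q j) → C i p = C i q)
    (hanti : ∀ p, Antitone (C · p))
    (hext : ∀ n (p : ∀ j, M j),
      ∃ m ≥ n, ∃ q : ∀ j, M j, (∀ j ≤ n, q j = p j) ∧ C m q ⊆ U)
    (n : ℕ) :
    ∃ m ≥ n, ∃ w : ∀ j, M j,
      ∀ p, (∀ j, n ≤ j → j ≤ m → p j = w j) → C m p ⊆ U := by
  classical
  let comb (a : ∀ j : Fin n, M j) (w : ∀ j, M j) : ∀ j, M j :=
    fun j => if h : j < n then a ⟨j, h⟩ else w j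
  have key : ∀ S : Finset (∀ j : Fin n, M j),
      ∃ m ≥ n, ∃ w, ∀ a ∈ S, C m (comb a w) ⊆ U := by
    intro S
    induction S using Finset.induction_on with
    | empty => exact ⟨n, le_rfl, fun _ => Classical.arbitrary _, by simp⟩
    | insert a S _ ih =>
      obtain ⟨m, hm, w, hw⟩ := ih
      obtain ⟨m', hm', q, hq, hqU⟩ := hext m (comb a w)
      -- `w'` keeps `w` up to `m`, so the prefixes in `S` stay handled at the level `m' ≥ m`.
      let w' : ∀ j, M j := fun j => if j ≤ m then w j else q j
      have hcomb : ∀ b, ∀ j ≤ m, comb b w' j = comb b w j := by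
        intro b j hj
        by_cases h : j < n <;> simp [comb, w', h, hj]
      have hqa : ∀ j ≤ m', comb a w' j = q j := by
        intro j hj
        by_cases h : j ≤ m
        · rw [hcomb a j h, hq j h]
        · simp [comb, w', h, show ¬ j < n by omega]
      refine ⟨m', hm.trans hm', w', ?_⟩
      simp only [Finset.mem_insert, forall_eq_or_imp]
      refine ⟨(hdep _ _ _ hqa).trans_subset hqU, fun b hb => ?_⟩
      calc C m' (comb b w') ⊆ C m (comb b w') := hanti _ hm'
        _ = C m (comb b w) := hdep _ _ _ (hcomb b)
        _ ⊆ U := hw b hb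
  have := Fintype.ofFinite (∀ j : Fin n, M j)
  obtain ⟨m, hm, w, hw⟩ := key Finset.univ
  refine ⟨m, hm, w, fun p hp => ?_⟩
  rw [hdep m p (comb (fun j => p j) w) fun j hj => ?_]
  · exact hw (fun j => p j) (Finset.mem_univ _)
  by_cases h : j < n
  · simp [comb, h]
  · simp [comb, h, hp j (by omega) hj]

theorem exists_blocks [∀ i, Nonempty (M i)] {U : ℕ → Set X}
    (hblock : ∀ i n, ∃ m ≥ n, ∃ w : ∀ j, M j,
      ∀ p, (∀ j, n ≤ j → j ≤ m → p j = w j) → C m p ⊆ U i) :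
    ∃ n : ℕ → ℕ, n 0 = 0 ∧ StrictMono n ∧ ∃ r : ∀ j, M j, ∀ i s,
      (∀ j, n i ≤ j → j < n (i + 1) → s j = r j) → ∃ l, C l s ⊆ U i := by
  have step : ∀ i (a : ℕ × ∀ j, M j), ∃ b : ℕ × ∀ j, M j,
      a.1 < b.1 ∧ (∀ j < a.1, b.2 j = a.2 j) ∧
      ∀ s, (∀ j, a.1 ≤ j → j < b.1 → s j = b.2 j) → ∃ l, C l s ⊆ U i := by
    rintro i ⟨k, r⟩
    obtain ⟨m, hm, w, hw⟩ := hblock i k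
    refine ⟨(m + 1, fun j => if j < k then r j else w j), by simp only; omega,
      fun j hj => if_pos hj, fun s hs => ⟨m, hw s fun j h1 h2 => ?_⟩⟩
    rw [hs j h1 (by simp only; omega)]
    exact if_neg (by omega)
  choose next hlt hagree hsub using step
  let g : ℕ → ℕ × ∀ j, M j := fun i => Nat.rec (0, fun _ => Classical.arbitrary _) next i
  have hn : StrictMono fun i => (g i).1 := strictMono_nat_of_lt_succ fun i => hlt i (g i)
  obtain ⟨r, hr⟩ := exists_agree_of_agree_succ (fun i => (g i).2) hn.monotone
    (fun j => Nat.lt_of_lt_of_le j.lt_succ_self (hn.id_le _)) (fun i => hagree i (g i))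
  exact ⟨_, rfl, hn, r, fun i s hs =>
    hsub i (g i) s fun j h1 h2 => (hs j h1 h2).trans (hr (i + 1) j h2)⟩

end Scheme

theorem stmt_13_general {X : Type*} [MetricSpace X]
    (M : ℕ → Type*) [∀ i, Finite (M i)] [∀ i, Nonempty (M i)]
    (R : Set X) (hR : IsMeagre Rᶜ)
    (C : ℕ → (∀ j, M j) → Set X)
    (hdep : ∀ (i : ℕ) (p q : ∀ j, M j), (∀ j ≤ i, p j = q j) → C i p = C i q)
    (hcompact : ∀ (i : ℕ) (p : ∀ j, M j), IsCompact (C i p))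
    (hsingleton : ∀ p : ∀ j, M j, ∃ x : X, ⋂ i, C i p = {x})
    (hdecr : ∀ (i : ℕ) (p : ∀ j, M j), C (i + 1) p ⊆ C i p)
    (hint : ∀ (i : ℕ) (p : ∀ j, M j), (interior (C i p)).Nonempty)
    (hcover : ∀ (i : ℕ) (p : ∀ j, M j),
      C i p = ⋃ m : M (i + 1), closure (interior (C (i + 1) (Function.update p (i + 1) m)))) :
    ∃ n : ℕ → ℕ, n 0 = 0 ∧ StrictMono n ∧
      ∃ r : ∀ j, M j, ∀ s : ∀ j, M j,
        {i : ℕ | ∀ j, n i ≤ j → j < n (i + 1) → s j = r j}.Infinite →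
        (⋂ i, C i s) ⊆ R := by
  obtain ⟨U, hUanti, hUo, hUd, hUR⟩ :=
    exists_antitone_isOpen_dense_of_mem_residual (compl_compl R ▸ hR : R ∈ residual X)
  have hanti : ∀ p, Antitone (C · p) := fun p => antitone_nat_of_succ_le (hdecr · p)
  have hcover' : ∀ i p, C i p ⊆ ⋃ m : M (i + 1), C (i + 1) (update p (i + 1) m) := by
    intro i p
    rw [hcover i p]
    exact iUnion_mono fun m => closure_minimal interior_subset (hcompact _ _).isClosed
  obtain ⟨n, hn0, hn, r, hr⟩ := exists_blocks fun i => exists_block hdep hanti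
    (exists_subset_of_isOpen_of_dense hdep hanti hcover' hcompact hsingleton hint (hUo i) (hUd i))
  refine ⟨n, hn0, hn, r, fun s hs x hx => hUR (mem_iInter.2 fun k => ?_)⟩
  obtain ⟨i, hi, hki⟩ := hs.exists_gt k
  obtain ⟨l, hl⟩ := hr i s hi
  exact hUanti hki.le (hl (mem_iInter.1 hx l))

/-- The combinatorial lemma about co-meager sets in compact metric
spaces: given a system of compact sets indexed by finite sequences satisfying the four
structural conditions, one can find a block decomposition `(n_i)` and a reference sequence
`r` such that any branch agreeing with `r` on infinitely many blocks lands inside the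
co-meager set `R`. -/
theorem stmt_13 {X : Type*} [MetricSpace X] [CompactSpace X]
    (M : ℕ → Type*) [∀ i, Finite (M i)] [∀ i, Nonempty (M i)]
    (R : Set X) (hR : IsMeagre Rᶜ)
    (C : ℕ → (∀ j, M j) → Set X)
    (hdep : ∀ (i : ℕ) (p q : ∀ j, M j), (∀ j ≤ i, p j = q j) → C i p = C i q)
    (hcompact : ∀ (i : ℕ) (p : ∀ j, M j), IsCompact (C i p))
    (hsingleton : ∀ p : ∀ j, M j, ∃ x : X, ⋂ i, C i p = {x})
    (hdecr : ∀ (i : ℕ) (p : ∀ j, M j), C (i + 1) p ⊆ C i p)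
    (hint : ∀ (i : ℕ) (p : ∀ j, M j), (interior (C i p)).Nonempty)
    (hcover : ∀ (i : ℕ) (p : ∀ j, M j),
      C i p = ⋃ m : M (i + 1), closure (interior (C (i + 1) (Function.update p (i + 1) m)))) :
    ∃ n : ℕ → ℕ, n 0 = 0 ∧ StrictMono n ∧
      ∃ r : ∀ j, M j, ∀ s : ∀ j, M j,
        {i : ℕ | ∀ j, n i ≤ j → j < n (i + 1) → s j = r j}.Infinite →
        (⋂ i, C i s) ⊆ R :=
  stmt_13_general M R hR C hdep hcompact hsingleton hdecr hint hcover
end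

section
/- Let G be a locally compact Polish group with left Haar measure μ. Assume the following rectangle property: for every F_σ set H ⊆ G × G, if H contains a rectangle C × D that is non-null (i.e. both C and D have positive outer μ-measure), then H contains a measurable rectangle A × B with (μ × μ)(A × B) > 0. Then every meager subgroup of G is null with respect to μ. -/
/-!
A meagre subgroup `S` lies in a meagre `F_σ` set `M`, so `{(x, y) | y / x ∈ M}` is an `F_σ` set
containing `S ×ˢ S`. If `S` were not null, the rectangle property would give a rectangle `A ×ˢ B`
of positive measure inside it, i.e. `B / A ⊆ M`. By Steinhaus' theorem `B / A` has nonempty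
interior, which a meagre set in the Baire space `G` cannot have.
-/

open MeasureTheory

/-- The rectangle property for a measure `μ`: every `F_σ` subset of the square that
contains a rectangle whose sides both have positive outer measure contains a measurable
rectangle of positive product measure. -/
def RectProp {G : Type*} [TopologicalSpace G] [MeasurableSpace G] (μ : Measure G) : Prop :=
  ∀ H : Set (G × G),
    (∃ F : ℕ → Set (G × G), (∀ n, IsClosed (F n)) ∧ H = ⋃ n, F n) →
    ∀ C D : Set G, C ×ˢ D ⊆ H → μ C ≠ 0 → μ D ≠ 0 →
      ∃ A B : Set G, NullMeasurableSet A μ ∧ NullMeasurableSet B μ ∧ A ×ˢ B ⊆ H ∧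
        0 < (μ.prod μ) (A ×ˢ B)

open Set Filter Pointwise Topology

lemma IsMeagre.exists_iUnion_isClosed_superset {X : Type*} [TopologicalSpace X] [BaireSpace X]
    {s : Set X} (hs : IsMeagre s) :
    ∃ F : ℕ → Set X, (∀ n, IsClosed (F n)) ∧ IsMeagre (⋃ n, F n) ∧ s ⊆ ⋃ n, F n := by
  obtain ⟨t, hts, htGδ, htd⟩ := mem_residual.1 hs
  obtain ⟨U, hUo, rfl⟩ := htGδ.eq_iInter_nat
  refine ⟨fun n ↦ (U n)ᶜ, fun n ↦ (hUo n).isClosed_compl, ?_, ?_⟩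
  · rw [IsMeagre, ← compl_iInter, compl_compl]
    exact residual_of_dense_Gδ htGδ htd
  · rw [← compl_iInter]
    exact subset_compl_comm.1 hts

namespace MeasureTheory.Measure

variable {G : Type*} [Group G] [MeasurableSpace G] [MeasurableMul₂ G] (μ : Measure G)
  {A B : Set G}

lemma exists_measure_smul_inter_ne_zero [MeasurableInv G] [SFinite μ] [IsMulLeftInvariant μ]
    (hA : MeasurableSet A) (hB : MeasurableSet B) (hA0 : μ A ≠ 0) (hB0 : μ B ≠ 0) :
    ∃ g : G, μ (g • A ∩ B) ≠ 0 := by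
  by_contra! h
  -- Fubini on a sheared rectangle: `∫ μ (x • A ∩ B) dx = μ B * μ A⁻¹`.
  have hshear := measurePreserving_prod_inv_mul_swap μ μ
  have hW : MeasurableSet (B ×ˢ A⁻¹) := hB.prod hA.inv
  have hfibre (x : G) :
      Prod.mk x ⁻¹' ((fun z : G × G ↦ (z.2, z.2⁻¹ * z.1)) ⁻¹' (B ×ˢ A⁻¹)) = x • A ∩ B := by
    ext y
    simp [mem_smul_set_iff_inv_smul_mem, and_comm]
  have key := hshear.measure_preimage hW.nullMeasurableSet
  simp only [prod_apply (hshear.measurable hW), hfibre, h, lintegral_zero, prod_prod] at key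
  rw [eq_comm, mul_eq_zero, measure_inv_null] at key
  exact key.elim hB0 hA0

variable [TopologicalSpace G] [IsTopologicalGroup G] [LocallyCompactSpace G] [BorelSpace G]
  [IsHaarMeasure μ] [SFinite μ] [InnerRegular μ]

lemma nonempty_interior_div_of_measurableSet (hA : MeasurableSet A) (hB : MeasurableSet B)
    (hA0 : μ A ≠ 0) (hB0 : μ B ≠ 0) : (interior (B / A)).Nonempty := by
  obtain ⟨g, hg⟩ := exists_measure_smul_inter_ne_zero μ hA hB hA0 hB0
  set E := g • A ∩ B
  have hE : E / E ∈ 𝓝 1 :=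
    div_mem_nhds_one_of_haar_pos μ E ((hA.const_smul g).inter hB) (pos_iff_ne_zero.2 hg)
  have hEB : E / E ⊆ (· * g) ⁻¹' (B / A) := by
    rintro _ ⟨b, hb, _, ⟨⟨a, ha, rfl⟩, -⟩, rfl⟩
    exact ⟨b, hb.2, a, ha, by simp [smul_eq_mul, div_eq_mul_inv, mul_assoc]⟩
  refine ⟨g, mem_interior_iff_mem_nhds.2 ?_⟩
  rw [← map_mul_right_nhds_one g]
  exact mem_map.2 (mem_of_superset hE hEB)

lemma nonempty_interior_div_of_nullMeasurableSet (hA : NullMeasurableSet A μ)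
    (hB : NullMeasurableSet B μ) (hA0 : μ A ≠ 0) (hB0 : μ B ≠ 0) :
    (interior (B / A)).Nonempty := by
  obtain ⟨A', hA'A, hA', hAA'⟩ := hA.exists_measurable_subset_ae_eq
  obtain ⟨B', hB'B, hB', hBB'⟩ := hB.exists_measurable_subset_ae_eq
  rw [← measure_congr hAA'] at hA0
  rw [← measure_congr hBB'] at hB0
  exact (nonempty_interior_div_of_measurableSet μ hA' hB' hA0 hB0).mono
    (interior_mono (div_subset_div hB'B hA'A))

end MeasureTheory.Measure

theorem stmt_14_general {G : Type*} [Group G] [TopologicalSpace G] [IsTopologicalGroup G]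
    [PolishSpace G] [LocallyCompactSpace G]
    [MeasurableSpace G] [BorelSpace G]
    (μ : Measure G) [μ.IsHaarMeasure]
    (hrect : RectProp μ)
    (S : Subgroup G) (hS : IsMeagre (S : Set G)) :
    μ (S : Set G) = 0 := by
  by_contra hSμ
  obtain ⟨F, hFc, hFm, hSF⟩ := hS.exists_iUnion_isClosed_superset
  let q : G × G → G := fun p ↦ p.2 / p.1
  have hq : Continuous q := continuous_snd.div' continuous_fst
  have hSS : (S : Set G) ×ˢ (S : Set G) ⊆ q ⁻¹' ⋃ n, F n :=
    fun p hp ↦ hSF (S.div_mem hp.2 hp.1)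
  obtain ⟨A, B, hA, hB, hAB, hpos⟩ := hrect _
    ⟨fun n ↦ q ⁻¹' F n, fun n ↦ (hFc n).preimage hq, preimage_iUnion⟩ _ _ hSS hSμ hSμ
  rw [Measure.prod_prod, CanonicallyOrderedAdd.mul_pos] at hpos
  have hBA : B / A ⊆ ⋃ n, F n := by
    rintro _ ⟨b, hb, a, ha, rfl⟩
    exact hAB (mk_mem_prod ha hb)
  obtain ⟨g, hg⟩ :=
    Measure.nonempty_interior_div_of_nullMeasurableSet μ hA hB hpos.1.ne' hpos.2.ne'
  exact not_isMeagre_of_isOpen isOpen_interior ⟨g, hg⟩ (hFm.mono (interior_subset.trans hBA))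

/-- If a locally compact Polish group with left Haar measure `μ`
satisfies the rectangle property, then every meager subgroup of it is `μ`-null. -/
theorem stmt_14 {G : Type*} [Group G] [TopologicalSpace G] [IsTopologicalGroup G]
    [PolishSpace G] [LocallyCompactSpace G]
    [MeasurableSpace G] [BorelSpace G]
    (μ : Measure G) [μ.IsHaarMeasure] [μ.InnerRegular]
    (hrect : RectProp μ)
    (S : Subgroup G) (hS : IsMeagre (S : Set G)) :
    μ (S : Set G) = 0 :=
  stmt_14_general μ hrect S hS
end
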